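/- arXiv:2201.04564 — 8 statements merged into one kernel-verified Lean document; each statement's English description precedes it below -/
import Mathlib

section
/- Let k: ℤ → [0,∞) be a nontrivial kernel with k(0)=0, k(−j)=k(j) for all j ∈ ℤ, and ∑_{j∈ℤ} k(j) < ∞, and suppose k has finite α-th moment for some α > 0, i.e. ∑_{j∈ℕ} k(j) j^α < ∞. Suppose L satisfies CD_Υ(0,F) with a CD-function F such that the function g defined by g(x) = F(x)/x for x > 0 and g(0) = 0 satisfies g(x) + g(y) ≤ g(x+y) for all x,y ∈ [0,∞). Let φ: (0,∞) → (0,∞) be the relaxation function associated with 2F, i.e. φ is differentiable with φ'(t) = −2F(φ(t)) for all t > 0 and φ(t) → ∞ as t → 0+. Let u: [0,∞) × ℤ → (0,∞) be bounded, continuously differentiable in time, and satisfy ∂_t u(t,x) = Lu(t,x) for all (t,x) ∈ (0,∞) × ℤ. Then for v(t,x) = log u(t,x) one has: (1) ∑_{j∈ℤ} k(j)|v(t,x+j)| < ∞ for every (t,x) ∈ (0,∞) × ℤ; (2) −Lv(t,x) ≤ φ(t) for all (t,x) ∈ (0,∞) × ℤ; (3) ∂_t v(t,x) ≥ Ψ_Υ(v(t,·))(x)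 − φ(t) for all (t,x) ∈ (0,∞) × ℤ. -/
/-!
Write `v = log u` and `G(t,x) = -Lv(t,x)`. Along the flow `∂ₜG = -L(Lu/u)`, and the
Bochner-type identity
`L(e^{-v} L e^{v})(x) = ∑ₗ k(l) e^{v(x+l)-v(x)} (Lv(x+l) - Lv(x)) + 2 Ψ_{2,Υ}(v)(x)`
together with `CD_Υ(0,F)` gives `∂ₜG ≤ -2F(G)` at approximate maximum points of `G(t,·)`.
Hence the Lipschitz function `m(t) = sup_x G(t,x)` has upper right Dini derivative at most
`-2F(m)` where it is positive, and comparison with the relaxation function `φ`, which blows up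
at `0`, yields `m ≤ φ`.

This needs `v` bounded, so it is run for `u + δ`, and `δ → 0` by dominated convergence. The
domination comes from the Harnack bound `u(t,x+j) ≥ c k(j)` and the summability of
`k log(1/k)`, which the finite `α`-th moment provides. Finally `∂ₜv = Lu/u = Ψ_Υ(v) + Lv`
turns `-Lv ≤ φ` into the last inequality.
-/

open scoped BigOperators
open Filter Set

noncomputable section

/-- `Υ(r) = e^r − 1 − r`. -/
def Ups (r : ℝ) : ℝ := Real.exp r - 1 - r

/-- `H(x) = (1/2) e^{−x} Υ(2x)`. -/
def Hfun (x : ℝ) : ℝ := (1 / 2) * Real.exp (-x) * Ups (2 * x)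

/-- The long-range jump operator `L u (x) = ∑_{j∈ℤ} k(j)(u(x+j) − u(x))`. -/
def Lop (k : ℤ → ℝ) (u : ℤ → ℝ) (x : ℤ) : ℝ := ∑' j : ℤ, k j * (u (x + j) - u x)

/-- `Ψ_Υ(u)(x) = ∑_{j∈ℤ} k(j) Υ(u(x+j) − u(x))`. -/
def PsiUps (k : ℤ → ℝ) (u : ℤ → ℝ) (x : ℤ) : ℝ := ∑' j : ℤ, k j * Ups (u (x + j) - u x)

/-- `Ψ_{2,Υ}(u)(x)`. -/
def Psi2 (k : ℤ → ℝ) (u : ℤ → ℝ) (x : ℤ) : ℝ :=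
  (1 / 2) * ∑' p : ℤ × ℤ, k p.1 * k p.2 * Real.exp (u (x + p.2) - u x) *
    Ups (u (x + p.1 + p.2) - u (x + p.1) - u (x + p.2) + u x)

/-- A bounded function on `ℤ`. -/
def BddFun (u : ℤ → ℝ) : Prop := ∃ M : ℝ, ∀ x : ℤ, |u x| ≤ M

/-- A nontrivial symmetric integrable kernel on `ℤ` vanishing at `0`. -/
structure IsKernel (k : ℤ → ℝ) : Prop where
  nonneg : ∀ j, 0 ≤ k j
  zero_at_zero : k 0 = 0
  symm : ∀ j, k (-j) = k j
  summable : Summable k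
  nontrivial : ∃ j, k j ≠ 0

/-- A CD-function: continuous on `[0,∞)`, nonnegative, `F(0)=0`, `r ↦ F(r)/r` strictly
increasing on `(0,∞)` and `1/F` integrable at `∞`. -/
def IsCDFunction (F : ℝ → ℝ) : Prop :=
  ContinuousOn F (Ici 0) ∧ (∀ r, 0 ≤ r → 0 ≤ F r) ∧ F 0 = 0 ∧
    StrictMonoOn (fun r => F r / r) (Ioi 0) ∧
    ∃ a, 0 < a ∧ MeasureTheory.IntegrableOn (fun r => 1 / F r) (Ici a)

/-- The curvature-dimension condition `CD_Υ(0,F)` for the operator generated by `k`. -/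
def CDUps (k : ℤ → ℝ) (F : ℝ → ℝ) : Prop :=
  ∀ u : ℤ → ℝ, BddFun u → ∀ x : ℤ, 0 ≤ -Lop k u x → F (-Lop k u x) ≤ Psi2 k u x

open scoped Topology
open Real

section WeightedSums

variable {ι : Type*} {w : ι → ℝ}

theorem summable_mul_of_abs_le (hw₀ : ∀ i, 0 ≤ w i) (hw : Summable w) {f : ι → ℝ} {C : ℝ}
    (hf : ∀ i, |f i| ≤ C) : Summable fun i => w i * f i := by
  refine Summable.of_norm_bounded (hw.mul_right C) fun i => ?_
  rw [Real.norm_eq_abs, abs_mul, abs_of_nonneg (hw₀ i)]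
  exact mul_le_mul_of_nonneg_left (hf i) (hw₀ i)

theorem abs_tsum_mul_le (hw₀ : ∀ i, 0 ≤ w i) (hw : Summable w) {f : ι → ℝ} {C : ℝ}
    (hf : ∀ i, |f i| ≤ C) : |∑' i, w i * f i| ≤ (∑' i, w i) * C := by
  have hs := summable_mul_of_abs_le hw₀ hw hf
  calc |∑' i, w i * f i| ≤ ∑' i, |w i * f i| := by
        simpa only [Real.norm_eq_abs] using norm_tsum_le_tsum_norm hs.norm
    _ ≤ ∑' i, w i * C := hs.abs.tsum_le_tsum (fun i => by
        rw [abs_mul, abs_of_nonneg (hw₀ i)]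
        exact mul_le_mul_of_nonneg_left (hf i) (hw₀ i)) (hw.mul_right C)
    _ = (∑' i, w i) * C := tsum_mul_right

end WeightedSums

section KernelSums

variable {k : ℤ → ℝ}

theorem abs_Lop_le (hk₀ : ∀ j, 0 ≤ k j) (hk : Summable k) {f : ℤ → ℝ} {x : ℤ} {C : ℝ}
    (hf : ∀ j, |f (x + j) - f x| ≤ C) : |Lop k f x| ≤ (∑' j, k j) * C :=
  abs_tsum_mul_le hk₀ hk hf

theorem summable_prod_mul_of_abs_le (hk₀ : ∀ j, 0 ≤ k j) (hk : Summable k) {f : ℤ × ℤ → ℝ}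
    {C : ℝ} (hf : ∀ p, |f p| ≤ C) : Summable fun p : ℤ × ℤ => k p.1 * k p.2 * f p := by
  have hkn : Summable fun j => ‖k j‖ := hk.congr fun j => (Real.norm_of_nonneg (hk₀ j)).symm
  have hkk : Summable fun p : ℤ × ℤ => k p.1 * k p.2 :=
    summable_mul_of_summable_norm (R := ℝ) (f := k) (g := k) hkn hkn
  exact summable_mul_of_abs_le (w := fun p : ℤ × ℤ => k p.1 * k p.2)
    (fun p => mul_nonneg (hk₀ p.1) (hk₀ p.2)) hkk hf

theorem tsum_prod_mul_eq_tsum_mul_tsum (hk₀ : ∀ j, 0 ≤ k j) (hk : Summable k)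
    {f : ℤ × ℤ → ℝ} {C : ℝ} (hf : ∀ p, |f p| ≤ C) :
    ∑' p : ℤ × ℤ, k p.1 * k p.2 * f p = ∑' j, k j * ∑' l, k l * f (j, l) := by
  rw [(summable_prod_mul_of_abs_le hk₀ hk hf).tsum_prod' fun j => by
    simpa only [mul_assoc] using (summable_mul_of_abs_le hk₀ hk fun l => hf (j, l)).mul_left (k j)]
  simp only [mul_assoc, tsum_mul_left]

theorem tsum_prod_mul_eq_tsum_mul_tsum_swap (hk₀ : ∀ j, 0 ≤ k j) (hk : Summable k)
    {f : ℤ × ℤ → ℝ} {C : ℝ} (hf : ∀ p, |f p| ≤ C) :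
    ∑' p : ℤ × ℤ, k p.1 * k p.2 * f p = ∑' l, k l * ∑' j, k j * f (j, l) := by
  calc ∑' p : ℤ × ℤ, k p.1 * k p.2 * f p = ∑' q : ℤ × ℤ, k q.1 * k q.2 * f q.swap := by
        rw [← (Equiv.prodComm ℤ ℤ).tsum_eq]
        exact tsum_congr fun q => by
          simp only [Equiv.prodComm_apply, Prod.fst_swap, Prod.snd_swap]; ring
    _ = _ := tsum_prod_mul_eq_tsum_mul_tsum hk₀ hk fun q => hf q.swap

theorem abs_sub_le_of_abs_le {v : ℤ → ℝ} {C : ℝ} (hv : ∀ y, |v y| ≤ C) (y z : ℤ) :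
    |v y - v z| ≤ 2 * C :=
  (abs_sub _ _).trans (by linarith [hv y, hv z])

theorem abs_Lop_le_of_abs_le (hk₀ : ∀ j, 0 ≤ k j) (hk : Summable k) {v : ℤ → ℝ}
    {C : ℝ} (hv : ∀ y, |v y| ≤ C) (x : ℤ) : |Lop k v x| ≤ (∑' j, k j) * (2 * C) :=
  abs_Lop_le hk₀ hk fun j => abs_sub_le_of_abs_le hv (x + j) x

end KernelSums

theorem mul_neg_log_le {a α n : ℝ} (ha : 0 < a) (hα : 0 < α) (hn : 1 ≤ n) :
    a * -log a ≤ 4 / α * (a * n ^ α) + 2 / n ^ 2 := by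
  have hn0 : 0 < n := one_pos.trans_le hn
  have hpow : 0 ≤ 4 / α * (a * n ^ α) := by positivity
  rw [← log_inv]
  -- Above `n⁻⁴`, `log a⁻¹ ≤ 4 log n`; below it, `a log a⁻¹ ≤ 2 √a ≤ 2 / n²`.
  rcases le_or_gt (n ^ 4)⁻¹ a with hbig | hsmall
  · have hlog : log a⁻¹ ≤ 4 * (n ^ α / α) := by
      calc log a⁻¹ ≤ log (n ^ 4) := log_le_log (by positivity) (by
            rwa [inv_le_comm₀ ha (by positivity)])
        _ = 4 * log n := by rw [log_pow]; norm_num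
        _ ≤ 4 * (n ^ α / α) := by gcongr; exact log_le_rpow_div hn0.le hα
    calc a * log a⁻¹ ≤ a * (4 * (n ^ α / α)) := mul_le_mul_of_nonneg_left hlog ha.le
      _ = 4 / α * (a * n ^ α) := by field_simp
      _ ≤ _ := le_add_of_nonneg_right (by positivity)
  · have hlog : log a⁻¹ ≤ 2 * √a⁻¹ := by
      simpa [sqrt_eq_rpow, div_eq_mul_inv, mul_comm] using
        log_le_rpow_div (inv_pos.2 ha).le (ε := 1 / 2) one_half_pos
    have hsqrt : √a ≤ 1 / n ^ 2 := by
      rw [show 1 / n ^ 2 = √((n ^ 4)⁻¹) by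
        rw [sqrt_inv, show n ^ 4 = (n ^ 2) ^ 2 by ring, sqrt_sq (by positivity), one_div]]
      exact sqrt_le_sqrt hsmall.le
    calc a * log a⁻¹ ≤ a * (2 * √a⁻¹) := mul_le_mul_of_nonneg_left hlog ha.le
      _ = 2 * √a := by
        rw [sqrt_inv]; field_simp; rw [sq_sqrt ha.le]
      _ ≤ 2 / n ^ 2 := by rw [div_eq_mul_one_div]; gcongr
      _ ≤ _ := le_add_of_nonneg_left hpow

theorem summable_mul_max_neg_log {k : ℤ → ℝ} (hk₀ : ∀ j, 0 ≤ k j) (hsymm : ∀ j, k (-j) = k j)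
    {α : ℝ} (hα : 0 < α) (hmom : Summable fun n : ℕ => k n * (n : ℝ) ^ α) :
    Summable fun j => k j * max 0 (-log (k j)) := by
  have hnat : Summable fun n : ℕ => k n * max 0 (-log (k n)) := by
    refine (summable_nat_add_iff 1).1 <| Summable.of_nonneg_of_le
      (fun n => mul_nonneg (hk₀ _) (le_max_left _ _)) (fun n => ?_)
      ((((summable_nat_add_iff 1).2 hmom).mul_left (4 / α)).add
        (((summable_nat_add_iff 1).2 (Real.summable_one_div_nat_pow.2 one_lt_two)).mul_left 2))
    have hn : (1 : ℝ) ≤ ((n + 1 : ℕ) : ℝ) := by norm_cast; omega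
    rcases (hk₀ ((n + 1 : ℕ) : ℤ)).eq_or_lt with h0 | hpos
    · rw [← h0, zero_mul]; positivity
    · rw [mul_max_of_nonneg _ _ (hk₀ _), mul_zero, max_le_iff]
      refine ⟨by positivity, (mul_neg_log_le hpos hα hn).trans_eq ?_⟩
      ring
  exact .of_nat_of_neg hnat (by simpa only [hsymm] using hnat)

section Bochner

variable {k : ℤ → ℝ} {v : ℤ → ℝ} {C : ℝ}

theorem Lop_exp_div_exp (v : ℤ → ℝ) (y : ℤ) :
    Lop k (fun z => exp (v z)) y / exp (v y) = ∑' l, k l * (exp (v (y + l) - v y) - 1) := by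
  rw [Lop, ← tsum_div_const]
  exact tsum_congr fun l => by rw [exp_sub]; field_simp

theorem exp_sub_le_of_abs_le (hv : ∀ y, |v y| ≤ C) (y z : ℤ) : exp (v y - v z) ≤ exp (2 * C) :=
  exp_le_exp.2 (le_of_abs_le (abs_sub_le_of_abs_le hv y z))

theorem Lop_exp_div_exp_sub (hk₀ : ∀ j, 0 ≤ k j) (hk : Summable k) (hv : ∀ y, |v y| ≤ C)
    (x j : ℤ) :
    Lop k (fun z => exp (v z)) (x + j) / exp (v (x + j)) - Lop k (fun z => exp (v z)) x / exp (v x)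
      = ∑' l, k l * (exp (v (x + j + l) - v (x + j)) - exp (v (x + l) - v x)) := by
  have hrow : ∀ y, Summable fun l => k l * (exp (v (y + l) - v y) - 1) := fun y =>
    summable_mul_of_abs_le hk₀ hk (C := exp (2 * C) + 1) fun l => by
      have := exp_sub_le_of_abs_le hv (y + l) y
      rw [abs_le]; constructor <;> linarith [exp_pos (v (y + l) - v y)]
  rw [Lop_exp_div_exp, Lop_exp_div_exp, ← (hrow _).tsum_sub (hrow _)]
  exact tsum_congr fun l => by rw [add_assoc]; ring

theorem Lop_Lop_exp_div_exp (hk₀ : ∀ j, 0 ≤ k j) (hk : Summable k) (hv : ∀ y, |v y| ≤ C)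
    (x : ℤ) :
    Lop k (fun y => Lop k (fun z => exp (v z)) y / exp (v y)) x =
      ∑' l, k l * exp (v (x + l) - v x) * (Lop k v (x + l) - Lop k v x) + 2 * Psi2 k v x := by
  set c : ℤ → ℝ := fun l => exp (v (x + l) - v x)
  set A : ℤ × ℤ → ℝ := fun p => v (x + p.1 + p.2) - v (x + p.1) - v (x + p.2) + v x
  set D : ℤ × ℤ → ℝ := fun p => exp (v (x + p.1 + p.2) - v (x + p.1)) - c p.2
  have hD : ∀ p, |D p| ≤ 2 * exp (2 * C) := fun p => by
    have := exp_sub_le_of_abs_le hv (x + p.1 + p.2) (x + p.1)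
    have := exp_sub_le_of_abs_le hv (x + p.2) x
    rw [abs_le]; constructor <;> linarith [exp_pos (v (x + p.2) - v x),
      exp_pos (v (x + p.1 + p.2) - v (x + p.1))]
  have hcA : ∀ p, |c p.2 * A p| ≤ exp (2 * C) * (4 * C) := fun p => by
    rw [abs_mul, abs_of_pos (exp_pos _)]
    refine mul_le_mul (exp_sub_le_of_abs_le hv _ _) ?_ (abs_nonneg _) (exp_pos _).le
    have := abs_le.1 (hv (x + p.1 + p.2)); have := abs_le.1 (hv (x + p.1))
    have := abs_le.1 (hv (x + p.2)); have := abs_le.1 (hv x)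
    rw [abs_le]; constructor <;> linarith
  have hDsplit : ∀ p, D p = c p.2 * A p + c p.2 * Ups (A p) := fun p => by
    have : exp (v (x + p.1 + p.2) - v (x + p.1)) = c p.2 * exp (A p) := by
      simp only [c, A, ← exp_add]; ring_nf
    simp only [D, this, Ups]; ring
  have hscA := summable_prod_mul_of_abs_le hk₀ hk hcA
  calc Lop k (fun y => Lop k (fun z => exp (v z)) y / exp (v y)) x
      = ∑' j, k j * ∑' l, k l * D (j, l) :=
        tsum_congr fun j => by rw [Lop_exp_div_exp_sub hk₀ hk hv]
    _ = ∑' p : ℤ × ℤ, k p.1 * k p.2 * (c p.2 * A p) +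
          ∑' p : ℤ × ℤ, k p.1 * k p.2 * (c p.2 * Ups (A p)) := by
        rw [← tsum_prod_mul_eq_tsum_mul_tsum hk₀ hk hD, ← Summable.tsum_add hscA]
        · exact tsum_congr fun p => by rw [hDsplit]; ring
        · exact ((summable_prod_mul_of_abs_le hk₀ hk hD).sub hscA).congr fun p => by
            rw [hDsplit]; ring
    _ = ∑' l, k l * exp (v (x + l) - v x) * (Lop k v (x + l) - Lop k v x) + 2 * Psi2 k v x := by
        rw [tsum_prod_mul_eq_tsum_mul_tsum_swap hk₀ hk hcA, Psi2]
        congr 1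
        · refine tsum_congr fun l => ?_
          have hinner : ∑' j, k j * (c l * A (j, l)) = c l * (Lop k v (x + l) - Lop k v x) := by
            rw [Lop, Lop, ← (summable_mul_of_abs_le hk₀ hk fun j =>
              abs_sub_le_of_abs_le hv (x + l + j) (x + l)).tsum_sub
              (summable_mul_of_abs_le hk₀ hk fun j => abs_sub_le_of_abs_le hv (x + j) x),
              ← tsum_mul_left]
            exact tsum_congr fun j => by simp only [A, add_right_comm x j l]; ring
          rw [hinner]; ring
        · rw [← mul_assoc, show (2 : ℝ) * (1 / 2) = 1 by norm_num, one_mul]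
          exact tsum_congr fun p => by ring

end Bochner

theorem neg_Lop_Lop_exp_div_exp_le {k : ℤ → ℝ} (hk₀ : ∀ j, 0 ≤ k j) (hk : Summable k)
    {F : ℝ → ℝ} (hCD : CDUps k F) {v : ℤ → ℝ} {C : ℝ} (hv : ∀ y, |v y| ≤ C) {x : ℤ} {κ : ℝ}
    (hx : 0 ≤ -Lop k v x) (hκ : ∀ y, -Lop k v y ≤ -Lop k v x + κ) :
    -Lop k (fun y => Lop k (fun z => exp (v z)) y / exp (v y)) x ≤
      (∑' j, k j) * exp (2 * C) * κ - 2 * F (-Lop k v x) := by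
  set e : ℤ → ℝ := fun l => exp (v (x + l) - v x)
  have he : ∀ l, 0 < e l ∧ e l ≤ exp (2 * C) := fun l =>
    ⟨exp_pos _, exp_sub_le_of_abs_le hv _ _⟩
  have hκ0 : 0 ≤ κ := by linarith [hκ x]
  have hterm : ∀ l, k l * (e l * (Lop k v x - Lop k v (x + l))) ≤ k l * (exp (2 * C) * κ) :=
    fun l => mul_le_mul_of_nonneg_left ((mul_le_mul_of_nonneg_left (by linarith [hκ (x + l)])
      (he l).1.le).trans (mul_le_mul_of_nonneg_right (he l).2 hκ0)) (hk₀ l)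
  have hsum : Summable fun l => k l * (e l * (Lop k v x - Lop k v (x + l))) :=
    summable_mul_of_abs_le hk₀ hk (C := exp (2 * C) * (2 * ((∑' j, k j) * (2 * C)))) fun l => by
      rw [abs_mul, abs_of_pos (he l).1]
      refine mul_le_mul (he l).2 ((abs_sub _ _).trans ?_) (abs_nonneg _) (exp_pos _).le
      linarith [abs_Lop_le_of_abs_le hk₀ hk hv x, abs_Lop_le_of_abs_le hk₀ hk hv (x + l)]
  have hdrift : -∑' l, k l * e l * (Lop k v (x + l) - Lop k v x) ≤
      (∑' j, k j) * exp (2 * C) * κ := by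
    calc -∑' l, k l * e l * (Lop k v (x + l) - Lop k v x)
        = ∑' l, k l * (e l * (Lop k v x - Lop k v (x + l))) := by
          rw [← tsum_neg]; exact tsum_congr fun l => by ring
      _ ≤ ∑' l, k l * (exp (2 * C) * κ) := hsum.tsum_le_tsum hterm (hk.mul_right _)
      _ = (∑' j, k j) * exp (2 * C) * κ := by rw [tsum_mul_right, mul_assoc]
  have hF := hCD v ⟨C, hv⟩ x hx
  rw [Lop_Lop_exp_div_exp hk₀ hk hv x]
  linarith

section DiniSupremum

variable {ι : Type*} [Nonempty ι] {G G' : ℝ → ι → ℝ} {L : ℝ}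

theorem abs_sub_le_mul_of_abs_deriv_le {g g' : ℝ → ℝ} (hg : ∀ s, 0 < s → HasDerivAt g (g' s) s)
    (hg' : ∀ s, 0 < s → |g' s| ≤ L) {s r : ℝ} (hs : 0 < s) (hr : 0 < r) :
    |g s - g r| ≤ L * |s - r| := by
  simpa only [Real.norm_eq_abs] using Convex.norm_image_sub_le_of_norm_hasDerivWithin_le
    (fun y hy => (hg y hy).hasDerivWithinAt) hg' (convex_Ioi 0) hr hs

theorem abs_iSup_sub_iSup_le (hG : ∀ x s, 0 < s → HasDerivAt (G · x) (G' s x) s)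
    (hG' : ∀ s, 0 < s → ∀ x, |G' s x| ≤ L) (hbdd : ∀ s, 0 < s → BddAbove (range (G s)))
    {s r : ℝ} (hs : 0 < s) (hr : 0 < r) :
    |(⨆ x, G s x) - ⨆ x, G r x| ≤ L * |s - r| := by
  have hlip : ∀ x s r, 0 < s → 0 < r → |G s x - G r x| ≤ L * |s - r| := fun x _ _ hs hr =>
    abs_sub_le_mul_of_abs_deriv_le (fun s hs => hG x s hs) (fun s hs => hG' s hs x) hs hr
  rw [abs_sub_le_iff]
  constructor <;> refine sub_le_iff_le_add.2 (ciSup_le fun x => ?_)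
  · linarith [le_ciSup (hbdd r hr) x, (abs_le.1 (hlip x s r hs hr)).2]
  · linarith [le_ciSup (hbdd s hs) x, (abs_le.1 (hlip x s r hs hr)).1]

theorem exists_slope_iSup_le {f : ℝ → ℝ} {A : ℝ}
    (hG : ∀ x s, 0 < s → HasDerivAt (G · x) (G' s x) s) (hG' : ∀ s, 0 < s → ∀ x, |G' s x| ≤ L)
    (hbdd : ∀ s, 0 < s → BddAbove (range (G s)))
    (hnear : ∀ s, 0 < s → ∀ x κ, 0 ≤ G s x → (∀ y, G s y ≤ G s x + κ) →
      G' s x ≤ A * κ - f (G s x))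
    {t z : ℝ} (ht : 0 < t) (htz : t < z) (hsmall : (z - t) ^ 2 + 2 * L * (z - t) ≤ ⨆ x, G t x) :
    ∃ y, |y - ⨆ x, G t x| ≤ (z - t) ^ 2 + 2 * L * (z - t) ∧
      slope (fun s => ⨆ x, G s x) t z ≤ A * ((z - t) ^ 2 + 2 * L * (z - t)) - f y + (z - t) := by
  obtain ⟨h, hh, rfl⟩ : ∃ h, 0 < h ∧ z = t + h := ⟨z - t, sub_pos.2 htz, by ring⟩
  simp only [add_sub_cancel_left] at hsmall ⊢
  set m : ℝ → ℝ := fun s => ⨆ x, G s x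
  set r := h ^ 2 + 2 * L * h
  have hL : 0 ≤ L := (abs_nonneg _).trans (hG' t ht (Classical.arbitrary ι))
  have hclose : ∀ s ∈ Icc t (t + h), ∀ s' ∈ Icc t (t + h), L * |s - s'| ≤ L * h :=
    fun s hs s' hs' => by gcongr; rw [abs_le]; constructor <;> linarith [hs.1, hs.2, hs'.1, hs'.2]
  have hm : ∀ s ∈ Icc t (t + h), ∀ s' ∈ Icc t (t + h), m s ≤ m s' + L * h := fun s hs s' hs' => by
    linarith [(abs_le.1 (abs_iSup_sub_iSup_le hG hG' hbdd (ht.trans_le hs.1)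
      (ht.trans_le hs'.1))).2, hclose s hs s' hs']
  -- Take an `h²`-approximate maximiser `x` of `G (t + h)` and apply the mean value theorem to
  -- `G · x` on `[t, t + h]`.
  have htI : t ∈ Icc t (t + h) := left_mem_Icc.2 htz.le
  have hzI : t + h ∈ Icc t (t + h) := right_mem_Icc.2 htz.le
  obtain ⟨x, hx⟩ : ∃ x, m (t + h) - h ^ 2 < G (t + h) x :=
    exists_lt_of_lt_ciSup (sub_lt_self _ (pow_pos hh 2))
  obtain ⟨ξ, ⟨htξ, hξz⟩, hξeq⟩ := exists_hasDerivAt_eq_slope (G · x) (G' · x) htz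
    (fun s hs => (hG x s (ht.trans_le hs.1)).continuousAt.continuousWithinAt)
    (fun s hs => hG x s (ht.trans hs.1))
  have hξ : 0 < ξ := ht.trans htξ
  have hξI : ξ ∈ Icc t (t + h) := ⟨htξ.le, hξz.le⟩
  have hGzξ : G (t + h) x ≤ G ξ x + L * h := by
    linarith [(abs_le.1 (abs_sub_le_mul_of_abs_deriv_le (fun s hs => hG x s hs)
      (fun s hs => hG' s hs x) hξ (ht.trans htz))).1, hclose ξ hξI _ hzI]
  have hGξ : G ξ x ≤ m ξ := le_ciSup (hbdd ξ hξ) x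
  have hGt : G t x ≤ m t := le_ciSup (hbdd t ht) x
  have hnearξ : ∀ y, G ξ y ≤ G ξ x + r := fun y => by
    linarith [le_ciSup (hbdd ξ hξ) y, hm ξ hξI _ hzI]
  have hdist : |G ξ x - m t| ≤ r := by
    rw [abs_le]; constructor <;> nlinarith [hm ξ hξI t htI, hm t htI _ hzI]
  have hder := hnear ξ hξ x r (by linarith [(abs_le.1 hdist).1]) hnearξ
  have hmvt : G (t + h) x - G t x = G' ξ x * h := by
    rw [hξeq, add_sub_cancel_left, div_mul_cancel₀ _ hh.ne']
  refine ⟨G ξ x, hdist, ?_⟩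
  rw [slope_def_field, add_sub_cancel_left, div_le_iff₀ hh]
  calc m (t + h) - m t ≤ G' ξ x * h + h * h := by nlinarith
    _ ≤ (A * r - f (G ξ x)) * h + h * h := by gcongr
    _ = (A * r - f (G ξ x) + h) * h := by ring

theorem eventually_slope_iSup_lt {f : ℝ → ℝ} {A : ℝ}
    (hG : ∀ x s, 0 < s → HasDerivAt (G · x) (G' s x) s) (hG' : ∀ s, 0 < s → ∀ x, |G' s x| ≤ L)
    (hbdd : ∀ s, 0 < s → BddAbove (range (G s)))
    (hnear : ∀ s, 0 < s → ∀ x κ, 0 ≤ G s x → (∀ y, G s y ≤ G s x + κ) →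
      G' s x ≤ A * κ - f (G s x))
    {t : ℝ} (ht : 0 < t) (hmt : 0 < ⨆ x, G t x) (hf : ContinuousWithinAt f (Ici 0) (⨆ x, G t x))
    {ε : ℝ} (hε : 0 < ε) :
    ∀ᶠ z in 𝓝[>] t, slope (fun s => ⨆ x, G s x) t z < -f (⨆ x, G t x) + ε := by
  obtain ⟨ρ, hρ, hfρ⟩ := Metric.continuousWithinAt_iff.1 hf (ε / 2) (half_pos hε)
  have hh : Tendsto (fun z => z - t) (𝓝[>] t) (𝓝 0) := by
    simpa using (tendsto_id.sub_const t).mono_left (nhdsWithin_le_nhds (a := t))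
  have hr : Tendsto (fun z => (z - t) ^ 2 + 2 * L * (z - t)) (𝓝[>] t) (𝓝 0) := by
    simpa using (hh.pow 2).add (hh.const_mul (2 * L))
  have hAr : Tendsto (fun z => A * ((z - t) ^ 2 + 2 * L * (z - t)) + (z - t)) (𝓝[>] t) (𝓝 0) := by
    simpa using (hr.const_mul A).add hh
  filter_upwards [self_mem_nhdsWithin, hr.eventually (gt_mem_nhds (lt_min hρ hmt)),
    hAr.eventually (gt_mem_nhds (half_pos hε))] with z hz hrz hAz
  obtain ⟨y, hy, hslope⟩ := exists_slope_iSup_le hG hG' hbdd hnear ht hz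
    (hrz.le.trans (min_le_right _ _))
  have hfy := hfρ (mem_Ici.2 (by linarith [(abs_le.1 hy).1, min_le_right ρ (⨆ x, G t x)]))
    ((Real.dist_eq _ _).trans_lt (hy.trans_lt (hrz.trans_le (min_le_left _ _))))
  rw [Real.dist_eq] at hfy
  linarith [(abs_lt.1 hfy).1]

end DiniSupremum

theorem le_add_mul_of_slope_lt_of_relaxation {f φ m : ℝ → ℝ} {L a b η : ℝ}
    (hf : MonotoneOn f (Ioi 0)) (hφpos : ∀ t, 0 < t → 0 < φ t)
    (hφ : ∀ t, 0 < t → HasDerivAt φ (-f (φ t)) t)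
    (hmL : ∀ s r, 0 < s → 0 < r → |m s - m r| ≤ L * |s - r|)
    (hslope : ∀ t, 0 < t → 0 < m t → ∀ ε, 0 < ε → ∃ᶠ z in 𝓝[>] t, slope m t z < -f (m t) + ε)
    (ha : 0 < a) (hab : a ≤ b) (hma : m a ≤ φ a) (hη : 0 < η) : m b ≤ φ b + η * (b - a) := by
  have hcont : ContinuousOn m (Icc a b) :=
    (LipschitzOnWith.of_dist_le' (s := Ioi 0) fun s hs r hr => by
      simpa only [Real.dist_eq] using hmL s r hs hr).continuousOn.mono
      fun s hs => ha.trans_le hs.1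
  -- Where `m ≤ 0` only the Lipschitz bound on the slopes of `m` is available.
  refine image_le_of_liminf_slope_right_lt_deriv_boundary' (f := m)
    (f' := fun s => if 0 < m s then -f (m s) else L + 1) (B := fun s => φ s + η * (s - a))
    (B' := fun s => -f (φ s) + η) hcont ?_ (by simpa using hma) ?_ ?_ ?_ (right_mem_Icc.2 hab)
  · intro z hz r hr
    have hz0 : 0 < z := ha.trans_le hz.1
    by_cases hmz : 0 < m z
    · simp only [if_pos hmz] at hr
      exact (hslope z hz0 hmz (r + f (m z)) (by linarith)).mono fun y hy => by linarith
    · simp only [if_neg hmz] at hr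
      refine Eventually.frequently ?_
      filter_upwards [self_mem_nhdsWithin] with y hy
      have hyz : 0 < y - z := sub_pos.2 hy
      rw [slope_def_field, div_lt_iff₀ hyz]
      have := hmL y z (hz0.trans hy) hz0
      rw [abs_of_pos hyz] at this
      nlinarith [le_abs_self (m y - m z)]
  · have hφc : ContinuousOn φ (Icc a b) := fun s hs =>
      (hφ s (ha.trans_le hs.1)).continuousAt.continuousWithinAt
    exact hφc.add (continuousOn_const.mul (continuousOn_id.sub continuousOn_const))
  · intro z hz
    have := (hφ z (ha.trans_le hz.1)).add (((hasDerivAt_id' z).sub_const a).const_mul η)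
    rw [mul_one] at this
    exact this.hasDerivWithinAt
  · intro z hz hcontact
    have hz0 : 0 < z := ha.trans_le hz.1
    have hφm : φ z ≤ m z := by
      rw [hcontact]; exact le_add_of_nonneg_right (mul_nonneg hη.le (sub_nonneg.2 hz.1))
    have hmz : 0 < m z := (hφpos z hz0).trans_le hφm
    simp only [if_pos hmz]
    linarith [hf (hφpos z hz0) hmz hφm]

theorem le_of_slope_lt_of_relaxation {f φ m : ℝ → ℝ} {L C : ℝ} (hf : MonotoneOn f (Ioi 0))
    (hφpos : ∀ t, 0 < t → 0 < φ t) (hφ : ∀ t, 0 < t → HasDerivAt φ (-f (φ t)) t)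
    (hφblow : Tendsto φ (𝓝[>] 0) atTop)
    (hmL : ∀ s r, 0 < s → 0 < r → |m s - m r| ≤ L * |s - r|) (hmC : ∀ t, 0 < t → m t ≤ C)
    (hslope : ∀ t, 0 < t → 0 < m t → ∀ ε, 0 < ε → ∃ᶠ z in 𝓝[>] t, slope m t z < -f (m t) + ε)
    {t : ℝ} (ht : 0 < t) : m t ≤ φ t := by
  obtain ⟨a, hCa, hat⟩ := ((hφblow.eventually_ge_atTop C).and (Ioo_mem_nhdsGT ht)).exists
  have hta : 0 < t - a := sub_pos.2 hat.2
  refine le_of_forall_pos_le_add fun η hη => ?_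
  simpa [div_mul_cancel₀ η hta.ne'] using le_add_mul_of_slope_lt_of_relaxation hf hφpos hφ hmL
    hslope hat.1 hat.2.le ((hmC a hat.1).trans hCa) (div_pos hη hta)

theorem IsCDFunction.monotoneOn {F : ℝ → ℝ} (hF : IsCDFunction F) : MonotoneOn F (Ioi 0) := by
  intro s hs r hr hsr
  have hs' : (0 : ℝ) < s := hs
  calc F s = s * (F s / s) := by field_simp
    _ ≤ r * (F r / r) := mul_le_mul hsr (hF.2.2.2.1.monotoneOn hs hr hsr)
        (div_nonneg (hF.2.1 s hs'.le) hs'.le) (hs'.trans_le hsr).le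
    _ = F r := by field_simp [(hs'.trans_le hsr).ne']

theorem hasDerivAt_Lop {k : ℤ → ℝ} (hk₀ : ∀ j, 0 ≤ k j) (hk : Summable k) {f f' : ℝ → ℤ → ℝ}
    {P C : ℝ} (hf : ∀ y s, 0 < s → HasDerivAt (f · y) (f' s y) s)
    (hf' : ∀ s, 0 < s → ∀ y, |f' s y| ≤ P) {t : ℝ} (ht : 0 < t) (hC : ∀ y, |f t y| ≤ C)
    (x : ℤ) : HasDerivAt (fun s => Lop k (f s) x) (Lop k (f' t) x) t :=
  hasDerivAt_tsum_of_isPreconnected (hk.mul_right (2 * P)) isOpen_Ioi isPreconnected_Ioi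
    (fun j s hs => ((hf _ s hs).sub (hf x s hs)).const_mul (k j))
    (fun j s hs => by
      rw [Real.norm_eq_abs, abs_mul, abs_of_nonneg (hk₀ j)]
      exact mul_le_mul_of_nonneg_left ((abs_sub _ _).trans
        (by linarith [hf' s hs (x + j), hf' s hs x])) (hk₀ j))
    ht (summable_mul_of_abs_le hk₀ hk fun j => (abs_sub _ _).trans
      (by linarith [hC (x + j), hC x] : _ ≤ 2 * C)) ht

structure IsHeatSolution (k : ℤ → ℝ) (u ut : ℝ → ℤ → ℝ) : Prop where
  hasDerivAt : ∀ x : ℤ, ∀ t, 0 < t → HasDerivAt (fun s => u s x) (ut t x) t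
  eq_Lop : ∀ t, 0 < t → ∀ x, ut t x = Lop k (u t) x

namespace IsHeatSolution

variable {k : ℤ → ℝ} {u ut : ℝ → ℤ → ℝ}

theorem add_const (hu : IsHeatSolution k u ut) (δ : ℝ) :
    IsHeatSolution k (fun t x => u t x + δ) ut where
  hasDerivAt x t ht := (hu.hasDerivAt x t ht).add_const δ
  eq_Lop t ht x := by rw [hu.eq_Lop t ht x, Lop, Lop]; exact tsum_congr fun j => by ring

variable {M : ℝ}

theorem mul_le_deriv_add (hk₀ : ∀ j, 0 ≤ k j) (hk : Summable k) (hu : IsHeatSolution k u ut)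
    (hpos : ∀ t, 0 < t → ∀ x, 0 < u t x) (hM : ∀ t, 0 < t → ∀ x, u t x ≤ M)
    {s : ℝ} (hs : 0 < s) (y j : ℤ) :
    k j * u s (y + j) ≤ ut s y + (∑' i, k i) * u s y := by
  have hsum : Summable fun l => k l * u s (y + l) := summable_mul_of_abs_le hk₀ hk fun l => by
    rw [abs_of_pos (hpos s hs _)]; exact hM s hs _
  have hLop : ut s y = ∑' l, k l * u s (y + l) - (∑' i, k i) * u s y := by
    rw [hu.eq_Lop s hs y, Lop, ← tsum_mul_right, ← hsum.tsum_sub (hk.mul_right _)]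
    exact tsum_congr fun l => by ring
  rw [hLop, sub_add_cancel]
  exact hsum.le_tsum j fun l _ => mul_nonneg (hk₀ l) (hpos s hs _).le

theorem hasDerivAt_exp_mul (hu : IsHeatSolution k u ut) {s : ℝ} (hs : 0 < s) (y : ℤ) (K : ℝ) :
    HasDerivAt (fun s => exp (K * s) * u s y) (exp (K * s) * (ut s y + K * u s y)) s :=
  ((((hasDerivAt_id' s).const_mul K).exp).mul (hu.hasDerivAt y s hs)).congr_deriv (by ring)

theorem monotoneOn_exp_mul (hk₀ : ∀ j, 0 ≤ k j) (hk : Summable k) (hu : IsHeatSolution k u ut)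
    (hpos : ∀ t, 0 < t → ∀ x, 0 < u t x) (hM : ∀ t, 0 < t → ∀ x, u t x ≤ M) (y : ℤ) :
    MonotoneOn (fun s => exp ((∑' i, k i) * s) * u s y) (Ioi 0) := by
  refine monotoneOn_of_hasDerivWithinAt_nonneg (convex_Ioi 0)
    (fun s hs => (hu.hasDerivAt_exp_mul hs y _).continuousAt.continuousWithinAt)
    (fun s hs => (hu.hasDerivAt_exp_mul (interior_subset hs) y _).hasDerivWithinAt)
    fun s hs => ?_
  have hs : 0 < s := interior_subset hs
  exact mul_nonneg (exp_pos _).le ((mul_nonneg (hk₀ 0) (hpos s hs _).le).trans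
    (hu.mul_le_deriv_add hk₀ hk hpos hM hs y 0))

theorem harnack (hk₀ : ∀ j, 0 ≤ k j) (hsymm : ∀ j, k (-j) = k j) (hk : Summable k)
    (hu : IsHeatSolution k u ut) (hpos : ∀ t, 0 < t → ∀ x, 0 < u t x)
    (hM : ∀ t, 0 < t → ∀ x, u t x ≤ M) {t : ℝ} (ht : 0 < t) (x j : ℤ) :
    k j * (t / 2 * u (t / 2) x) ≤ exp ((∑' i, k i) * t) * u t (x + j) := by
  set K := ∑' i, k i
  have ht2 : 0 < t / 2 := half_pos ht
  set c := k j * (exp (K * (t / 2)) * u (t / 2) x)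
  have hmono : MonotoneOn (fun s => exp (K * s) * u s (x + j) - c * s) (Ici (t / 2)) := by
    refine monotoneOn_of_hasDerivWithinAt_nonneg (convex_Ici _)
      (fun s hs => ((hu.hasDerivAt_exp_mul (ht2.trans_le hs) _ K).sub
        ((hasDerivAt_id' s).const_mul c)).continuousAt.continuousWithinAt)
      (fun s hs => ((hu.hasDerivAt_exp_mul (ht2.trans (interior_Ici.subset hs)) _ K).sub
        ((hasDerivAt_id' s).const_mul c)).hasDerivWithinAt) fun s hs => ?_
    rw [interior_Ici] at hs
    have hs0 : 0 < s := ht2.trans hs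
    have hjump := hu.mul_le_deriv_add hk₀ hk hpos hM hs0 (x + j) (-j)
    rw [hsymm, add_neg_cancel_right] at hjump
    have hx : exp (K * (t / 2)) * u (t / 2) x ≤ exp (K * s) * u s x :=
      hu.monotoneOn_exp_mul hk₀ hk hpos hM x ht2 hs0 hs.le
    have := mul_le_mul_of_nonneg_left hjump (exp_pos (K * s)).le
    have := mul_le_mul_of_nonneg_left hx (hk₀ j)
    simp only [mul_one]
    nlinarith
  have hK : 1 ≤ exp (K * (t / 2)) := one_le_exp (mul_nonneg (tsum_nonneg hk₀) ht2.le)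
  have h := hmono Set.self_mem_Ici (mem_Ici.2 (half_le_self ht.le)) (half_le_self ht.le)
  simp only at h
  have := (hpos (t / 2) ht2 (x + j)).le
  have := mul_le_mul_of_nonneg_right hK (mul_nonneg (hk₀ j) (hpos (t / 2) ht2 x).le)
  nlinarith [exp_pos (K * (t / 2))]


theorem summable_mul_abs_log (hk : IsKernel k) {α : ℝ} (hα : 0 < α)
    (hmom : Summable fun n : ℕ => k n * (n : ℝ) ^ α)
    (hu : IsHeatSolution k u ut) (hpos : ∀ t, 0 < t → ∀ x, 0 < u t x)
    (hM : ∀ t, 0 < t → ∀ x, u t x ≤ M) {t : ℝ} (ht : 0 < t) (x : ℤ) :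
    Summable fun j => k j * |log (u t (x + j))| := by
  set c := t / 2 * u (t / 2) x
  have hc : 0 < c := mul_pos (half_pos ht) (hpos _ (half_pos ht) x)
  set C := |log M| + |log c - (∑' i, k i) * t|
  refine Summable.of_nonneg_of_le (fun j => mul_nonneg (hk.nonneg j) (abs_nonneg _)) (fun j => ?_)
    ((hk.summable.mul_right C).add (summable_mul_max_neg_log hk.nonneg hk.symm hα hmom))
  rw [← mul_add]
  rcases (hk.nonneg j).eq_or_lt with hj | hj
  · rw [← hj, zero_mul, zero_mul]
  refine mul_le_mul_of_nonneg_left ?_ hj.le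
  have hu' := hpos t ht (x + j)
  have hupper : log (u t (x + j)) ≤ log M := log_le_log hu' (hM t ht _)
  have hlower : log (k j) + log c - (∑' i, k i) * t ≤ log (u t (x + j)) := by
    have := log_le_log (mul_pos hj hc) (hu.harnack hk.nonneg hk.symm hk.summable hpos hM ht x j)
    rw [log_mul hj.ne' hc.ne', log_mul (exp_pos _).ne' hu'.ne', log_exp] at this
    linarith
  rw [abs_le]
  constructor
  · linarith [neg_abs_le (log c - (∑' i, k i) * t), le_max_right 0 (-log (k j)),
      abs_nonneg (log M)]
  · linarith [le_abs_self (log M), abs_nonneg (log c - (∑' i, k i) * t),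
      le_max_left 0 (-log (k j))]

theorem abs_div_le {w wt : ℝ → ℤ → ℝ} (hw : IsHeatSolution k w wt)
    (hk₀ : ∀ j, 0 ≤ k j) (hk : Summable k) {δ M : ℝ} (hδ : 0 < δ)
    (hlo : ∀ t, 0 < t → ∀ y, δ ≤ w t y) (hhi : ∀ t, 0 < t → ∀ y, w t y ≤ M) {s : ℝ} (hs : 0 < s)
    (y : ℤ) : |wt s y / w s y| ≤ (∑' j, k j) * (M - δ) / δ := by
  have hwt : |wt s y| ≤ (∑' j, k j) * (M - δ) := by
    rw [hw.eq_Lop s hs y]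
    refine abs_Lop_le hk₀ hk fun j => abs_sub_le_iff.2 ⟨?_, ?_⟩ <;>
      linarith [hlo s hs y, hhi s hs y, hlo s hs (y + j), hhi s hs (y + j)]
  rw [abs_div, abs_of_pos (hδ.trans_le (hlo s hs y))]
  exact div_le_div₀ (mul_nonneg (tsum_nonneg hk₀) (by linarith [hlo s hs y, hhi s hs y])) hwt
    hδ (hlo s hs y)

theorem neg_Lop_log_le {w wt : ℝ → ℤ → ℝ} (hk₀ : ∀ j, 0 ≤ k j)
    (hk : Summable k) {F : ℝ → ℝ} (hF : IsCDFunction F) (hCD : CDUps k F) {φ : ℝ → ℝ}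
    (hφpos : ∀ t, 0 < t → 0 < φ t) (hφode : ∀ t, 0 < t → HasDerivAt φ (-(2 * F (φ t))) t)
    (hφblow : Tendsto φ (𝓝[>] 0) atTop) (hw : IsHeatSolution k w wt) {δ M : ℝ} (hδ : 0 < δ)
    (hlo : ∀ t, 0 < t → ∀ y, δ ≤ w t y) (hhi : ∀ t, 0 < t → ∀ y, w t y ≤ M)
    {t : ℝ} (ht : 0 < t) (x : ℤ) : -Lop k (fun y => log (w t y)) x ≤ φ t := by
  set K := ∑' j, k j
  set C := max |log δ| |log M|
  set P := K * (M - δ) / δ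
  set G : ℝ → ℤ → ℝ := fun s x => -Lop k (fun y => log (w s y)) x
  have hwpos : ∀ s, 0 < s → ∀ y, 0 < w s y := fun s hs y => hδ.trans_le (hlo s hs y)
  have hv : ∀ s, 0 < s → ∀ y, |log (w s y)| ≤ C := fun s hs y =>
    abs_le_max_abs_abs (log_le_log hδ (hlo s hs y)) (log_le_log (hwpos s hs y) (hhi s hs y))
  have hp : ∀ s, 0 < s → ∀ y, |wt s y / w s y| ≤ P := fun _ hs =>
    hw.abs_div_le hk₀ hk hδ hlo hhi hs
  have hG : ∀ x s, 0 < s →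
      HasDerivAt (G · x) (-Lop k (fun y => wt s y / w s y) x) s := fun x s hs =>
    (hasDerivAt_Lop hk₀ hk (fun y r hr => (hw.hasDerivAt y r hr).log (hwpos r hr y).ne') hp hs
      (hv s hs) x).neg
  have hG' : ∀ s, 0 < s → ∀ x, |-Lop k (fun y => wt s y / w s y) x| ≤ K * (2 * P) :=
    fun s hs x => (abs_neg _).trans_le (abs_Lop_le_of_abs_le hk₀ hk (hp s hs) x)
  have hGC : ∀ s, 0 < s → ∀ x, G s x ≤ K * (2 * C) := fun s hs x =>
    le_of_abs_le ((abs_neg _).trans_le (abs_Lop_le_of_abs_le hk₀ hk (hv s hs) x))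
  have hbdd : ∀ s, 0 < s → BddAbove (range (G s)) := fun s hs =>
    ⟨K * (2 * C), forall_mem_range.2 (hGC s hs)⟩
  have hnear : ∀ s, 0 < s → ∀ x κ, 0 ≤ G s x → (∀ y, G s y ≤ G s x + κ) →
      -Lop k (fun y => wt s y / w s y) x ≤ K * exp (2 * C) * κ - 2 * F (G s x) := by
    intro s hs x κ hx hκ
    have hwexp : w s = fun y => exp (log (w s y)) := funext fun y => (exp_log (hwpos s hs y)).symm
    have hdiv : (fun y => wt s y / w s y) =
        fun y => Lop k (fun z => exp (log (w s z))) y / exp (log (w s y)) := by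
      funext y; rw [hw.eq_Lop s hs y, ← hwexp, exp_log (hwpos s hs y)]
    rw [hdiv]
    exact neg_Lop_Lop_exp_div_exp_le hk₀ hk hCD (hv s hs) hx hκ
  have hmono : MonotoneOn (fun r => 2 * F r) (Ioi 0) := fun a ha b hb hab => by
    simpa using hF.monotoneOn ha hb hab
  have hslope : ∀ t, 0 < t → 0 < ⨆ x, G t x → ∀ ε, 0 < ε →
      ∃ᶠ z in 𝓝[>] t, slope (fun s => ⨆ x, G s x) t z < -(2 * F (⨆ x, G t x)) + ε :=
    fun t ht hmt ε hε => (eventually_slope_iSup_lt hG hG' hbdd hnear ht hmt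
      (continuousWithinAt_const.mul (hF.1 _ (mem_Ici.2 hmt.le))) hε).frequently
  exact (le_ciSup (hbdd t ht) x).trans <| le_of_slope_lt_of_relaxation hmono hφpos hφode hφblow
    (fun s r hs hr => abs_iSup_sub_iSup_le hG hG' hbdd hs hr)
    (fun s hs => ciSup_le (hGC s hs)) hslope ht

end IsHeatSolution

section LogOfPositive

variable {k : ℤ → ℝ} {u : ℤ → ℝ} {M : ℝ}

theorem tendsto_Lop_log_add (hk₀ : ∀ j, 0 ≤ k j) (hk : Summable k) (hpos : ∀ y, 0 < u y)
    (hM : ∀ y, u y ≤ M) {x : ℤ} (hlog : Summable fun j => k j * |log (u (x + j))|) :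
    Tendsto (fun δ => Lop k (fun y => log (u y + δ)) x) (𝓝[>] 0)
      (𝓝 (Lop k (fun y => log (u y)) x)) := by
  have hlim : ∀ y, Tendsto (fun δ => log (u y + δ)) (𝓝[>] 0) (𝓝 (log (u y))) := fun y => by
    have : ContinuousAt (fun δ => log (u y + δ)) 0 :=
      (continuousAt_const.add continuousAt_id).log (by simpa using (hpos y).ne')
    simpa using this.tendsto.mono_left nhdsWithin_le_nhds
  have habs : ∀ δ ∈ Ioo (0 : ℝ) 1, ∀ y, |log (u y + δ)| ≤ |log (u y)| + |log (M + 1)| :=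
    fun δ hδ y => (abs_le_max_abs_abs (log_le_log (hpos y) (by linarith [hδ.1]))
      (log_le_log (by linarith [hpos y, hδ.1]) (by linarith [hM y, hδ.2]))).trans
      (max_le_add_of_nonneg (abs_nonneg _) (abs_nonneg _))
  refine tendsto_tsum_of_dominated_convergence
    (bound := fun j => k j * |log (u (x + j))| + k j * (|log (u x)| + 2 * |log (M + 1)|))
    (hlog.add (hk.mul_right _)) (fun j => ((hlim _).sub (hlim x)).const_mul (k j)) ?_
  filter_upwards [Ioo_mem_nhdsGT one_pos] with δ hδ j
  rw [Real.norm_eq_abs, abs_mul, abs_of_nonneg (hk₀ j), ← mul_add]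
  refine mul_le_mul_of_nonneg_left ((abs_sub _ _).trans ?_) (hk₀ j)
  linarith [habs δ hδ (x + j), habs δ hδ x]

theorem Lop_div_eq_PsiUps_add_Lop (hk₀ : ∀ j, 0 ≤ k j) (hk : Summable k) (hpos : ∀ y, 0 < u y)
    (hM : ∀ y, u y ≤ M) {x : ℤ} (hlog : Summable fun j => k j * |log (u (x + j))|) :
    Lop k u x / u x = PsiUps k (fun y => log (u y)) x + Lop k (fun y => log (u y)) x := by
  have hexp : ∀ j, exp (log (u (x + j)) - log (u x)) = u (x + j) / u x := fun j => by
    rw [exp_sub, exp_log (hpos _), exp_log (hpos _)]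
  have hsum_exp : Summable fun j => k j * (exp (log (u (x + j)) - log (u x)) - 1) :=
    summable_mul_of_abs_le hk₀ hk (C := M / u x + 1) fun j => by
      rw [hexp, abs_le]
      have := div_le_div_of_nonneg_right (hM (x + j)) (hpos x).le
      have := div_pos (hpos (x + j)) (hpos x)
      constructor <;> linarith
  have hsum_log : Summable fun j => k j * (log (u (x + j)) - log (u x)) :=
    (hlog.add (hk.mul_right |log (u x)|)).of_norm_bounded fun j => by
      rw [Real.norm_eq_abs, abs_mul, abs_of_nonneg (hk₀ j), ← mul_add]
      exact mul_le_mul_of_nonneg_left (abs_sub _ _) (hk₀ j)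
  have hu : u = fun y => exp (log (u y)) := funext fun y => (exp_log (hpos y)).symm
  calc Lop k u x / u x = Lop k (fun y => exp (log (u y))) x / exp (log (u x)) := by
        rw [← hu, exp_log (hpos x)]
    _ = ∑' j, k j * (exp (log (u (x + j)) - log (u x)) - 1) := Lop_exp_div_exp _ x
    _ = ∑' j, (k j * Ups (log (u (x + j)) - log (u x)) +
          k j * (log (u (x + j)) - log (u x))) := tsum_congr fun j => by rw [Ups]; ring
    _ = PsiUps k (fun y => log (u y)) x + Lop k (fun y => log (u y)) x := by
        refine Summable.tsum_add ((hsum_exp.sub hsum_log).congr fun j => ?_) hsum_log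
        rw [Ups]; ring

end LogOfPositive

theorem li_yau_general (k : ℤ → ℝ) (hk : IsKernel k) (α : ℝ) (hα : 0 < α)
    (hmom : Summable fun n : ℕ => k (n : ℤ) * (n : ℝ) ^ α)
    (F : ℝ → ℝ) (hF : IsCDFunction F) (hCD : CDUps k F)
    (φ : ℝ → ℝ) (hφpos : ∀ t, 0 < t → 0 < φ t)
    (hφode : ∀ t, 0 < t → HasDerivAt φ (-(2 * F (φ t))) t)
    (hφblow : Tendsto φ (nhdsWithin 0 (Ioi 0)) atTop)
    (u : ℝ → ℤ → ℝ) (ut : ℝ → ℤ → ℝ)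
    (hupos : ∀ t, 0 ≤ t → ∀ x, 0 < u t x)
    (hubdd : ∃ M : ℝ, ∀ t, 0 ≤ t → ∀ x, u t x ≤ M)
    (huderiv : ∀ x : ℤ, ∀ t, 0 < t → HasDerivAt (fun s => u s x) (ut t x) t)
    (hheat : ∀ t, 0 < t → ∀ x, ut t x = Lop k (u t) x) :
    ∀ t, 0 < t → ∀ x : ℤ,
      (Summable fun j : ℤ => k j * |Real.log (u t (x + j))|) ∧
      -Lop k (fun y => Real.log (u t y)) x ≤ φ t ∧
      PsiUps k (fun y => Real.log (u t y)) x - φ t ≤ ut t x / u t x := by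
  obtain ⟨M, hM⟩ := hubdd
  have hu : IsHeatSolution k u ut := ⟨huderiv, hheat⟩
  have hpos : ∀ t, 0 < t → ∀ x, 0 < u t x := fun t ht => hupos t ht.le
  have hM' : ∀ t, 0 < t → ∀ x, u t x ≤ M := fun t ht => hM t ht.le
  intro t ht x
  have hlog := hu.summable_mul_abs_log hk hα hmom hpos hM' ht x
  have hLv : -Lop k (fun y => log (u t y)) x ≤ φ t := by
    have hlim := (tendsto_Lop_log_add hk.nonneg hk.summable (hpos t ht) (hM' t ht) hlog).neg
    refine le_of_tendsto hlim (eventually_nhdsWithin_of_forall fun δ hδ => ?_)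
    exact (hu.add_const δ).neg_Lop_log_le hk.nonneg hk.summable hF hCD hφpos hφode hφblow hδ
      (fun s hs y => le_add_of_nonneg_left (hpos s hs y).le)
      (fun s hs y => add_le_add_left (hM' s hs y) δ) ht x
  refine ⟨hlog, hLv, ?_⟩
  rw [hheat t ht x, Lop_div_eq_PsiUps_add_Lop hk.nonneg hk.summable (hpos t ht) (hM' t ht) hlog]
  linarith

/-- Li-Yau inequality: under `CD_Υ(0,F)` (with `g(x)=F(x)/x` superadditive) and a finite
`α`-th moment, every bounded positive solution `u` of the heat equation `∂_t u = Lu`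
satisfies, with `v = log u` and `φ` the relaxation function of `2F`:
(1) `v(t,x+·) ∈ ℓ¹_k(ℤ)`, (2) `−Lv(t,x) ≤ φ(t)`, (3) `∂_t v(t,x) ≥ Ψ_Υ(v)(t,x) − φ(t)`. -/
theorem li_yau (k : ℤ → ℝ) (hk : IsKernel k) (α : ℝ) (hα : 0 < α)
    (hmom : Summable fun n : ℕ => k (n : ℤ) * (n : ℝ) ^ α)
    (F : ℝ → ℝ) (hF : IsCDFunction F) (hCD : CDUps k F)
    (hsuper : ∀ x y : ℝ, 0 < x → 0 < y → F x / x + F y / y ≤ F (x + y) / (x + y))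
    (φ : ℝ → ℝ) (hφpos : ∀ t, 0 < t → 0 < φ t)
    (hφode : ∀ t, 0 < t → HasDerivAt φ (-(2 * F (φ t))) t)
    (hφblow : Tendsto φ (nhdsWithin 0 (Ioi 0)) atTop)
    (u : ℝ → ℤ → ℝ) (ut : ℝ → ℤ → ℝ)
    (hupos : ∀ t, 0 ≤ t → ∀ x, 0 < u t x)
    (hubdd : ∃ M : ℝ, ∀ t, 0 ≤ t → ∀ x, u t x ≤ M)
    (huderiv : ∀ x : ℤ, ∀ t, 0 < t → HasDerivAt (fun s => u s x) (ut t x) t)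
    (hutcont : ∀ x : ℤ, ContinuousOn (fun t => ut t x) (Ioi 0))
    (hheat : ∀ t, 0 < t → ∀ x, ut t x = Lop k (u t) x) :
    ∀ t, 0 < t → ∀ x : ℤ,
      (Summable fun j : ℤ => k j * |Real.log (u t (x + j))|) ∧
      -Lop k (fun y => Real.log (u t y)) x ≤ φ t ∧
      PsiUps k (fun y => Real.log (u t y)) x - φ t ≤ ut t x / u t x :=
  li_yau_general k hk α hα hmom F hF hCD φ hφpos hφode hφblow u ut hupos hubdd huderiv hheat
end
end

section
/- Let k: ℤ → [0,∞) be a nontrivial kernel with k(0)=0, k(−j)=k(j) for all j ∈ ℤ and ∑_{j∈ℤ} k(j) < ∞, and let L be the operator generated by k. Let u: [0,∞) × ℤ → (0,∞) be continuously differentiable in time and such that ∑_{j∈ℤ} k(j) Υ(log u(t,x+j) − log u(t,x)) < ∞ for all t > 0 and x ∈ ℤ. Let φ: (0,∞) → [0,∞) be continuous and suppose u satisfies the differential Harnack estimate ∂_t log u(t,x) ≥ Ψ_Υ(log u(t,·))(x) − φ(t) for all (t,x) ∈ (0,∞) × ℤ. Let 0 < t₁ < t₂ and x₁, x₂ ∈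 ℤ. Then for every N ∈ ℕ and every sequence of distinct points y₀, y₁, …, y_N ∈ ℤ with y₀ = x₁, y_N = x₂ and k(y_i − y_{i−1}) > 0 for all i ∈ {1,…,N}, there holds u(t₁,x₁) ≤ u(t₂,x₂) · exp( ∫_{t₁}^{t₂} φ(t) dt + (2N/(t₂−t₁)) ∑_{i=1}^N 1/k(y_i − y_{i−1}) ). -/
/-!
Put `U(t,x) = log u(t,x) + ∫_{t₁}^t φ`; then `∂_t U ≥ Ψ_Υ(U(t,·))`, since `Ψ_Υ` only sees
differences. Across one edge `b → a` with `κ = k(a - b) > 0` and on a time interval `[s₁, s₂]`,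
`U(·,a)` is nondecreasing (as `Ψ_Υ ≥ 0`) while `∂_t U(·,b) ≥ κ Υ(U(·,a) - U(·,b))`. Since
`Υ(r) ≥ r²/2` for `r ≥ 0`, this Riccati-type inequality gives
`U(s₁,a) ≤ U(s₂,b) + 2 / (κ (s₂ - s₁))`. Chaining this along the path `y` over `N` equal time
steps yields the estimate.
-/

open scoped BigOperators
open Filter Set

noncomputable section

lemma Ups_nonneg (r : ℝ) : 0 ≤ Ups r := by
  have := Real.add_one_le_exp r
  unfold Ups
  linarith

lemma sq_div_two_le_Ups {r : ℝ} (hr : 0 ≤ r) : r ^ 2 / 2 ≤ Ups r := by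
  have := Real.quadratic_le_exp_of_nonneg hr
  unfold Ups
  linarith

lemma monotoneOn_Icc_of_hasDerivAt {f f' : ℝ → ℝ} {a b : ℝ}
    (hf : ∀ t ∈ Icc a b, HasDerivAt f (f' t) t) (hf' : ∀ t ∈ Ioo a b, 0 ≤ f' t) :
    MonotoneOn f (Icc a b) := by
  refine monotoneOn_of_hasDerivWithinAt_nonneg (f' := f') (convex_Icc a b)
    (fun t ht => (hf t ht).continuousAt.continuousWithinAt) (fun t ht => ?_) (fun t ht => ?_)
  · rw [interior_Icc] at ht ⊢
    exact (hf t (Ioo_subset_Icc_self ht)).hasDerivWithinAt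
  · rw [interior_Icc] at ht
    exact hf' t ht

lemma le_add_two_div_of_deriv_ge_mul_Ups {f g f' g' : ℝ → ℝ} {κ s₁ s₂ : ℝ}
    (hκ : 0 < κ) (hs : s₁ < s₂)
    (hf : ∀ t ∈ Icc s₁ s₂, HasDerivAt f (f' t) t) (hg : ∀ t ∈ Icc s₁ s₂, HasDerivAt g (g' t) t)
    (hf' : ∀ t ∈ Icc s₁ s₂, 0 ≤ f' t) (hg' : ∀ t ∈ Icc s₁ s₂, κ * Ups (f t - g t) ≤ g' t) :
    f s₁ ≤ g s₂ + 2 / (κ * (s₂ - s₁)) := by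
  have hΔ : 0 < κ * (s₂ - s₁) := mul_pos hκ (sub_pos.2 hs)
  by_contra! hlt
  set m := f s₁ - g s₂ with hm_def
  have hm : 2 < m * (κ * (s₂ - s₁)) := by rw [← div_lt_iff₀ hΔ]; linarith
  have hm0 : 0 < m := by nlinarith
  have hf_mono := monotoneOn_Icc_of_hasDerivAt hf fun t ht => hf' t (Ioo_subset_Icc_self ht)
  have hg_mono := monotoneOn_Icc_of_hasDerivAt hg fun t ht =>
    (mul_nonneg hκ.le (Ups_nonneg _)).trans (hg' t (Ioo_subset_Icc_self ht))
  have hs₁ : s₁ ∈ Icc s₁ s₂ := left_mem_Icc.2 hs.le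
  have hs₂ : s₂ ∈ Icc s₁ s₂ := right_mem_Icc.2 hs.le
  set D : ℝ → ℝ := fun t => m + (g s₂ - g t) with hD_def
  have hD_pos : ∀ t ∈ Icc s₁ s₂, 0 < D t := fun t ht => by
    have := hg_mono ht hs₂ ht.2
    simp only [hD_def]
    linarith
  have hD_le : ∀ t ∈ Icc s₁ s₂, D t ≤ f t - g t := fun t ht => by
    have := hf_mono hs₁ ht ht.1
    simp only [hD_def, hm_def]
    linarith
  -- `D ≤ f - g` and `g' ≥ κ (f - g)² / 2` make `1 / D` grow at rate at least `κ / 2`.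
  have hK : MonotoneOn (fun t => (D t)⁻¹ - κ / 2 * t) (Icc s₁ s₂) := by
    refine monotoneOn_Icc_of_hasDerivAt (f' := fun t => -(-g' t) / D t ^ 2 - κ / 2)
      (fun t ht => ?_) (fun t ht => ?_)
    · have hD : HasDerivAt D (-g' t) t := ((hg t ht).const_sub _).const_add m
      exact (hD.fun_inv (hD_pos t ht).ne').sub
        (((hasDerivAt_id' t).const_mul (κ / 2)).congr_deriv (mul_one _))
    · have ht := Ioo_subset_Icc_self ht
      have hD2 : 0 < D t ^ 2 := pow_pos (hD_pos t ht) 2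
      have hsq : D t ^ 2 ≤ (f t - g t) ^ 2 := pow_le_pow_left₀ (hD_pos t ht).le (hD_le t ht) 2
      have hUps := sq_div_two_le_Ups ((hD_pos t ht).le.trans (hD_le t ht))
      rw [neg_neg, sub_nonneg, le_div_iff₀ hD2]
      nlinarith [hg' t ht]
  have hK12 := hK hs₁ hs₂ hs.le
  have hDs₂ : D s₂ = m := by simp [hD_def]
  simp only [hDs₂] at hK12
  have hinv : 0 < (D s₁)⁻¹ := inv_pos.2 (hD_pos s₁ hs₁)
  have hrate : κ * (s₂ - s₁) / 2 < m⁻¹ := by linarith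
  have hmul := mul_lt_mul_of_pos_left hrate hm0
  rw [mul_inv_cancel₀ hm0.ne'] at hmul
  linarith

lemma hasDerivAt_integral_of_continuousOn {φ : ℝ → ℝ} {s : Set ℝ} {a t : ℝ} (hs : IsOpen s)
    (hφ : ContinuousOn φ s) (hat : uIcc a t ⊆ s) :
    HasDerivAt (fun r => ∫ x in a..r, φ x) (φ t) t :=
  have ht : t ∈ s := hat right_mem_uIcc
  intervalIntegral.integral_hasDerivAt_right (hφ.mono hat).intervalIntegrable
    (hφ.stronglyMeasurableAtFilter hs t ht) ((hφ t ht).continuousAt (hs.mem_nhds ht))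

section PsiUps

variable {k : ℤ → ℝ}

lemma PsiUps_nonneg (hk : ∀ j, 0 ≤ k j) (w : ℤ → ℝ) (x : ℤ) : 0 ≤ PsiUps k w x :=
  tsum_nonneg fun j => mul_nonneg (hk j) (Ups_nonneg _)

lemma mul_Ups_le_PsiUps (hk : ∀ j, 0 ≤ k j) {w : ℤ → ℝ} {x : ℤ}
    (hw : Summable fun j => k j * Ups (w (x + j) - w x)) (a : ℤ) :
    k (a - x) * Ups (w a - w x) ≤ PsiUps k w x := by
  simpa [PsiUps] using hw.le_tsum (a - x) fun j _ => mul_nonneg (hk j) (Ups_nonneg _)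

@[simp]
lemma PsiUps_add_const (w : ℤ → ℝ) (c : ℝ) : PsiUps k (fun x => w x + c) = PsiUps k w := by
  funext x
  simp only [PsiUps, add_sub_add_right_eq_sub]

variable {v v' : ℝ → ℤ → ℝ}

lemma le_add_two_div_of_PsiUps_le_deriv (hk : ∀ j, 0 ≤ k j) {s₁ s₂ : ℝ} (hs : s₁ < s₂)
    {a b : ℤ} (hab : 0 < k (a - b))
    (hv : ∀ x, ∀ t ∈ Icc s₁ s₂, HasDerivAt (v · x) (v' t x) t)
    (hsum : ∀ t ∈ Icc s₁ s₂, Summable fun j => k j * Ups (v t (b + j) - v t b))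
    (hΨ : ∀ t ∈ Icc s₁ s₂, ∀ x, PsiUps k (v t) x ≤ v' t x) :
    v s₁ a ≤ v s₂ b + 2 / (k (a - b) * (s₂ - s₁)) :=
  le_add_two_div_of_deriv_ge_mul_Ups hab hs (hv a) (hv b)
    (fun t ht => (PsiUps_nonneg hk _ _).trans (hΨ t ht a))
    (fun t ht => (mul_Ups_le_PsiUps hk (hsum t ht) a).trans (hΨ t ht b))

lemma le_add_sum_of_chain (hk : ∀ j, 0 ≤ k j) (hk_symm : ∀ j, k (-j) = k j)
    (hv : ∀ x, ∀ t > 0, HasDerivAt (v · x) (v' t x) t)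
    (hsum : ∀ t > 0, ∀ x, Summable fun j => k j * Ups (v t (x + j) - v t x))
    (hΨ : ∀ t > 0, ∀ x, PsiUps k (v t) x ≤ v' t x)
    {σ : ℕ → ℝ} (hσ₀ : 0 < σ 0) (hσ : StrictMono σ) {y : ℕ → ℤ} {N : ℕ}
    (hy : ∀ i < N, 0 < k (y (i + 1) - y i)) :
    v (σ 0) (y 0) ≤ v (σ N) (y N) +
      ∑ i ∈ Finset.range N, 2 / (k (y (i + 1) - y i) * (σ (i + 1) - σ i)) := by
  induction N with
  | zero => simp
  | succ n ih =>
    have hpos : ∀ t ∈ Icc (σ n) (σ (n + 1)), 0 < t := fun t ht =>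
      hσ₀.trans_le ((hσ.monotone n.zero_le).trans ht.1)
    have hk_swap : k (y n - y (n + 1)) = k (y (n + 1) - y n) := by rw [← hk_symm, neg_sub]
    have hedge := le_add_two_div_of_PsiUps_le_deriv hk (hσ n.lt_succ_self)
      (hk_swap ▸ hy n n.lt_succ_self) (fun x t ht => hv x t (hpos t ht))
      (fun t ht => hsum t (hpos t ht) _) (fun t ht => hΨ t (hpos t ht))
    rw [hk_swap] at hedge
    rw [Finset.sum_range_succ]
    linarith [ih fun i hi => hy i (hi.trans n.lt_succ_self)]

end PsiUps

theorem harnack_general (k : ℤ → ℝ) (hk : IsKernel k)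
    (u : ℝ → ℤ → ℝ) (vt : ℝ → ℤ → ℝ)
    (hupos : ∀ t, 0 ≤ t → ∀ x, 0 < u t x)
    (hvderiv : ∀ x : ℤ, ∀ t, 0 < t → HasDerivAt (fun s => Real.log (u s x)) (vt t x) t)
    (hsum : ∀ t, 0 < t → ∀ x : ℤ,
      Summable fun j : ℤ => k j * Ups (Real.log (u t (x + j)) - Real.log (u t x)))
    (φ : ℝ → ℝ) (hφcont : ContinuousOn φ (Ioi 0))
    (hdiff : ∀ t, 0 < t → ∀ x : ℤ,
      PsiUps k (fun y => Real.log (u t y)) x - φ t ≤ vt t x)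
    (t₁ t₂ : ℝ) (ht₁ : 0 < t₁) (ht : t₁ < t₂) (x₁ x₂ : ℤ)
    (N : ℕ) (hN : 1 ≤ N) (y : ℕ → ℤ)
    (hy0 : y 0 = x₁) (hyN : y N = x₂)
    (hpos : ∀ i, i < N → 0 < k (y (i + 1) - y i)) :
    u t₁ x₁ ≤ u t₂ x₂ * Real.exp ((∫ t in t₁..t₂, φ t) +
      (2 * (N : ℝ) / (t₂ - t₁)) * ∑ i ∈ Finset.range N, 1 / k (y (i + 1) - y i)) := by
  set U : ℝ → ℤ → ℝ := fun t x => Real.log (u t x) + ∫ s in t₁..t, φ s with hU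
  have hU_deriv : ∀ x, ∀ t > 0, HasDerivAt (U · x) (vt t x + φ t) t := fun x t ht =>
    (hvderiv x t ht).add <| hasDerivAt_integral_of_continuousOn isOpen_Ioi hφcont
      fun r hr => (lt_min ht₁ ht).trans_le hr.1
  have hU_sum : ∀ t > 0, ∀ x, Summable fun j => k j * Ups (U t (x + j) - U t x) := by
    simpa only [hU, add_sub_add_right_eq_sub] using hsum
  have hU_Ψ : ∀ t > 0, ∀ x, PsiUps k (U t) x ≤ vt t x + φ t := fun t ht x => by
    simp only [hU, PsiUps_add_const]
    linarith [hdiff t ht x]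
  have hN_pos : (0 : ℝ) < N := by exact_mod_cast hN
  have hΔ : 0 < (t₂ - t₁) / N := div_pos (sub_pos.2 ht) hN_pos
  have hchain := le_add_sum_of_chain hk.nonneg hk.symm hU_deriv hU_sum hU_Ψ
    (σ := fun i => t₁ + i * ((t₂ - t₁) / N)) (by simpa using ht₁)
    ((Nat.strictMono_cast.mul_const hΔ).const_add t₁) hpos
  have hσN : t₁ + N * ((t₂ - t₁) / N) = t₂ := by field_simp; ring
  have hsum_eq : ∑ i ∈ Finset.range N,
      2 / (k (y (i + 1) - y i) * (t₁ + ↑(i + 1) * ((t₂ - t₁) / N) - (t₁ + i * ((t₂ - t₁) / N))))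
      = 2 * N / (t₂ - t₁) * ∑ i ∈ Finset.range N, 1 / k (y (i + 1) - y i) := by
    rw [Finset.mul_sum]
    refine Finset.sum_congr rfl fun i _ => ?_
    push_cast
    field_simp
    ring
  simp only [hU, Nat.cast_zero, zero_mul, add_zero, hσN, hy0, hyN, hsum_eq,
    intervalIntegral.integral_same] at hchain
  rw [← Real.exp_log (hupos t₁ ht₁.le x₁), ← Real.exp_log (hupos t₂ (ht₁.trans ht).le x₂),
    ← Real.exp_add, Real.exp_le_exp]
  linarith

/-- Harnack inequality: if the positive function `u`, `C¹` in time, satisfies the differential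
Harnack estimate `∂_t log u ≥ Ψ_Υ(log u) − φ(t)`, then for `0 < t₁ < t₂`, `x₁, x₂ ∈ ℤ`, and
every chain of distinct points `y₀ = x₁, …, y_N = x₂` with `k(y_i − y_{i−1}) > 0`,
`u(t₁,x₁) ≤ u(t₂,x₂) exp(∫_{t₁}^{t₂} φ + (2N/(t₂−t₁)) ∑ 1/k(y_i − y_{i−1}))`. -/
theorem harnack (k : ℤ → ℝ) (hk : IsKernel k)
    (u : ℝ → ℤ → ℝ) (vt : ℝ → ℤ → ℝ)
    (hupos : ∀ t, 0 ≤ t → ∀ x, 0 < u t x)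
    (hvderiv : ∀ x : ℤ, ∀ t, 0 < t → HasDerivAt (fun s => Real.log (u s x)) (vt t x) t)
    (hvtcont : ∀ x : ℤ, ContinuousOn (fun t => vt t x) (Ioi 0))
    (hsum : ∀ t, 0 < t → ∀ x : ℤ,
      Summable fun j : ℤ => k j * Ups (Real.log (u t (x + j)) - Real.log (u t x)))
    (φ : ℝ → ℝ) (hφcont : ContinuousOn φ (Ioi 0)) (hφnn : ∀ t, 0 < t → 0 ≤ φ t)
    (hdiff : ∀ t, 0 < t → ∀ x : ℤ,
      PsiUps k (fun y => Real.log (u t y)) x - φ t ≤ vt t x)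
    (t₁ t₂ : ℝ) (ht₁ : 0 < t₁) (ht : t₁ < t₂) (x₁ x₂ : ℤ)
    (N : ℕ) (hN : 1 ≤ N) (y : ℕ → ℤ)
    (hy0 : y 0 = x₁) (hyN : y N = x₂)
    (hdistinct : ∀ i ≤ N, ∀ j ≤ N, y i = y j → i = j)
    (hpos : ∀ i, i < N → 0 < k (y (i + 1) - y i)) :
    u t₁ x₁ ≤ u t₂ x₂ * Real.exp ((∫ t in t₁..t₂, φ t) +
      (2 * (N : ℝ) / (t₂ - t₁)) * ∑ i ∈ Finset.range N, 1 / k (y (i + 1) - y i)) :=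
  harnack_general k hk u vt hupos hvderiv hsum φ hφcont hdiff t₁ t₂ ht₁ ht x₁ x₂ N hN y hy0 hyN hpos
end
end

section
/- Let k: ℤ → [0,∞) be a nontrivial kernel with k(0)=0, k(−j)=k(j) for all j ∈ ℤ and |k|₁ := ∑_{j∈ℤ} k(j) < ∞, with support S = {j : k(j) > 0}, and suppose ∑_{j∈S} k(j) log(2 + 1/k(j)) < ∞. Define ρ: [0,∞) → [0,∞) by ρ(λ) = ∑_{j∈S} k(j)·(H')^{−1}(λ/k(j)) for λ > 0 and ρ(0) = 0. Then: (1) ρ is a strictly increasing continuous bijection from [0,∞) onto [0,∞); (2) ρ(λ) − |k|₁·log(2λ) → ∑_{j∈S} k(j) log(1/k(j)) as λ → ∞; (3) there exist constants C₁, C₂ > 0 such that C₁(ρ̄₁(λ) + ρ̄₂(λ)) ≤ ρ(λ) ≤ C₂(ρ̄₁(λ) + ρ̄₂(λ)) for all λ > 0, where ρ̄₁(λ) = ∑_{j∈S, k(j)<λ} k(j) log(1 + λ/k(j)) and ρ̄₂(λ) = ∑_{j∈ℤ, k(j)≥λ} λ. -/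
open scoped BigOperators
open Filter Set

noncomputable section

/-- The derivative `H'(x) = (1/2)(e^x − e^{−x} + 2x e^{−x})` of `H`. -/
def HD (x : ℝ) : ℝ := (1 / 2) * (Real.exp x - Real.exp (-x) + 2 * x * Real.exp (-x))

/-- The inverse function `(H')^{−1}` (well defined since `H'` is a strictly increasing
bijection of `ℝ`). -/
def HDinv : ℝ → ℝ := Function.invFun HD

/-- `ρ(λ) = ∑_{j∈S} k(j) (H')^{−1}(λ/k(j))` for `λ > 0`, `ρ(λ)=0` for `λ ≤ 0`
(note that the summands with `k(j) = 0` vanish). -/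
def rho (k : ℤ → ℝ) (lam : ℝ) : ℝ :=
  if lam ≤ 0 then 0 else ∑' j : ℤ, k j * HDinv (lam / k j)

/-- The inverse function `ρ^{−1}` of `ρ`. -/
def rhoInv (k : ℤ → ℝ) : ℝ → ℝ := Function.invFun (rho k)

/-- `G(a) = ∫_0^a ρ^{−1}(s) ds`. -/
def Gfun (k : ℤ → ℝ) (a : ℝ) : ℝ := ∫ s in (0:ℝ)..a, rhoInv k s

/-- `ρ̄₁(λ) = ∑_{j∈S, k(j)<λ} k(j) log(1 + λ/k(j))` (summands with `k(j)=0` vanish). -/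
def rhobar1 (k : ℤ → ℝ) (lam : ℝ) : ℝ :=
  ∑' j : ℤ, if k j < lam then k j * Real.log (1 + lam / k j) else 0

/-- `ρ̄₂(λ) = ∑_{j∈ℤ, k(j)≥λ} λ`. -/
def rhobar2 (k : ℤ → ℝ) (lam : ℝ) : ℝ :=
  ∑' j : ℤ, if lam ≤ k j then lam else 0

/-!
`H'` is a strictly increasing bijection of `ℝ` with
`(eˣ - 1)/2 ≤ H'(x) ≤ min (e^{2x} - 1) (eˣ/2 + 1)` for `x ≥ 0`. Hence `(H')⁻¹ y` lies between `log (1 + y) / 2` and `2 log (1 + y)` for `y ≥ 0` and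
equals `log (2y) + o(1)` as `y → ∞`. So each term `k(j) (H')⁻¹(λ/k(j))` of `ρ(λ)` is comparable to
`k(j) log (1 + λ/k(j))`, which is comparable to the `j`-th term of `ρ̄₁(λ) + ρ̄₂(λ)` and is summable
by the logarithmic moment condition. Continuity and the asymptotics of `ρ` then follow by dominated
convergence, strict monotonicity holds termwise, and surjectivity follows from `ρ(0) = 0`,
continuity and `ρ(λ) → ∞`.
-/

open Real Topology

lemma hasDerivAt_hd (x : ℝ) :
    HasDerivAt HD ((exp x + (3 - 2 * x) * exp (-x)) / 2) x := by
  have hneg : HasDerivAt (fun x => exp (-x)) (-exp (-x)) x := by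
    simpa using (hasDerivAt_neg x).exp
  have := (((hasDerivAt_exp x).sub hneg).add
    (((hasDerivAt_id x).const_mul 2).mul hneg)).const_mul (1 / 2 : ℝ)
  exact this.congr_deriv (by simp only [id]; ring)

lemma hd_strictMono : StrictMono HD := by
  refine strictMono_of_deriv_pos fun x => ?_
  rw [(hasDerivAt_hd x).deriv]
  have h₁ : exp x * exp x = exp (2 * x) := by rw [← exp_add, two_mul]
  have h₂ : exp (-x) * exp x = 1 := by rw [← exp_add, neg_add_cancel, exp_zero]
  have hmul : (exp x + (3 - 2 * x) * exp (-x)) * exp x = exp (2 * x) + 3 - 2 * x := by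
    linear_combination h₁ + (3 - 2 * x) * h₂
  have : 0 < (exp x + (3 - 2 * x) * exp (-x)) * exp x := by
    rw [hmul]; linarith [add_one_le_exp (2 * x)]
  exact div_pos (pos_of_mul_pos_left this (exp_pos x).le) two_pos

lemma hd_le_two_mul {x : ℝ} (hx : x ≤ 0) : HD x ≤ 2 * x := by
  have hsinh : (exp x - exp (-x)) / 2 ≤ x := by rw [← sinh_eq]; exact sinh_le_self_iff.2 hx
  have : 1 ≤ exp (-x) := one_le_exp (by linarith)
  unfold HD; nlinarith

lemma exp_sub_one_div_two_le_hd {x : ℝ} (hx : 0 ≤ x) : (exp x - 1) / 2 ≤ HD x := by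
  have : exp (-x) ≤ 1 := exp_le_one_iff.2 (by linarith)
  have : 0 ≤ x * exp (-x) := mul_nonneg hx (exp_pos _).le
  unfold HD; nlinarith

lemma hd_le_exp_two_mul_sub_one {x : ℝ} (hx : 0 ≤ x) : HD x ≤ exp (2 * x) - 1 := by
  have h2x : exp (2 * x) = exp x * exp x := by rw [← exp_add]; ring_nf
  have := add_one_le_exp (2 * x)
  have := one_le_exp hx
  have : 0 < exp (-x) := exp_pos _
  have : exp (-x) ≤ 1 := exp_le_one_iff.2 (by linarith)
  have : exp x * exp (-x) = 1 := by rw [← exp_add]; simp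
  unfold HD; nlinarith

lemma hd_le_exp_div_two_add_one (x : ℝ) : HD x ≤ exp x / 2 + 1 := by
  have : x * exp (-x) ≤ 1 := by
    rw [exp_neg, ← div_eq_mul_inv, div_le_one (exp_pos x)]
    linarith [add_one_le_exp x]
  have := exp_pos (-x)
  unfold HD; nlinarith

lemma hd_surjective : Function.Surjective HD := by
  refine Continuous.surjective (by unfold HD; fun_prop) ?_ ?_
  · refine tendsto_atTop_mono' _ ?_ (tendsto_id.atTop_div_const two_pos)
    filter_upwards [eventually_ge_atTop 0] with x hx
    simp only [id]
    linarith [add_one_le_exp x, exp_sub_one_div_two_le_hd hx]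
  · refine tendsto_atBot_mono' _ ?_ (tendsto_id.const_mul_atBot two_pos)
    filter_upwards [eventually_le_atBot 0] with x hx
    exact hd_le_two_mul hx

def hdOrderIso : ℝ ≃o ℝ := StrictMono.orderIsoOfSurjective HD hd_strictMono hd_surjective

lemma hdInv_eq_symm : HDinv = hdOrderIso.symm := by
  funext y
  apply hd_strictMono.injective
  rw [HDinv, Function.invFun_eq (hd_surjective y)]
  exact (hdOrderIso.apply_symm_apply y).symm

lemma le_hdInv_iff {x y : ℝ} : x ≤ HDinv y ↔ HD x ≤ y := by
  rw [hdInv_eq_symm]; exact hdOrderIso.le_symm_apply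

lemma hdInv_le_iff {x y : ℝ} : HDinv y ≤ x ↔ y ≤ HD x := by
  rw [hdInv_eq_symm]; exact hdOrderIso.symm_apply_le

lemma hdInv_strictMono : StrictMono HDinv := by
  rw [hdInv_eq_symm]; exact hdOrderIso.symm.strictMono

lemma hdInv_continuous : Continuous HDinv := by
  rw [hdInv_eq_symm]; exact hdOrderIso.symm.continuous

lemma hdInv_zero : HDinv 0 = 0 :=
  le_antisymm (hdInv_le_iff.2 (by simp [HD])) (le_hdInv_iff.2 (by simp [HD]))

lemma hdInv_nonneg {y : ℝ} (hy : 0 ≤ y) : 0 ≤ HDinv y :=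
  hdInv_zero ▸ hdInv_strictMono.monotone hy

lemma hdInv_le_log_one_add_two_mul {y : ℝ} (hy : 0 ≤ y) : HDinv y ≤ log (1 + 2 * y) := by
  refine hdInv_le_iff.2 ?_
  have h := exp_sub_one_div_two_le_hd (log_nonneg (by linarith : 1 ≤ 1 + 2 * y))
  rw [exp_log (by linarith)] at h
  linarith

lemma hdInv_le_two_mul_log_one_add {y : ℝ} (hy : 0 ≤ y) : HDinv y ≤ 2 * log (1 + y) :=
  calc HDinv y ≤ log (1 + 2 * y) := hdInv_le_log_one_add_two_mul hy
    _ ≤ log ((1 + y) ^ 2) := log_le_log (by linarith) (by nlinarith)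
    _ = 2 * log (1 + y) := by rw [log_pow]; norm_num

lemma log_one_add_div_two_le_hdInv {y : ℝ} (hy : 0 ≤ y) : log (1 + y) / 2 ≤ HDinv y := by
  refine le_hdInv_iff.2 ?_
  have h := hd_le_exp_two_mul_sub_one (div_nonneg (log_nonneg (by linarith : 1 ≤ 1 + y)) two_pos.le)
  rwa [mul_div_cancel₀ _ two_ne_zero, exp_log (by linarith), add_sub_cancel_left] at h

lemma log_two_mul_sub_two_le_hdInv {y : ℝ} (hy : 1 < y) : log (2 * y - 2) ≤ HDinv y := by
  refine le_hdInv_iff.2 ?_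
  have h := hd_le_exp_div_two_add_one (log (2 * y - 2))
  rw [exp_log (by linarith)] at h
  linarith

lemma tendsto_hdInv_sub_log : Tendsto (fun y => HDinv y - log (2 * y)) atTop (𝓝 0) := by
  have hlim : ∀ c : ℝ, Tendsto (fun y : ℝ => log (1 + c * y⁻¹)) atTop (𝓝 0) := fun c => by
    simpa using ((tendsto_inv_atTop_zero.const_mul c).const_add 1).log (by simp)
  refine tendsto_of_tendsto_of_tendsto_of_le_of_le' (hlim (-1)) (hlim (1 / 2)) ?_ ?_
  all_goals
    filter_upwards [eventually_gt_atTop 1] with y hy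
    have hy0 : 0 < y := by linarith
  · have h := log_two_mul_sub_two_le_hdInv hy
    rw [← sub_le_sub_iff_right (log (2 * y)), ← log_div (by linarith) (by positivity)] at h
    rwa [show (2 * y - 2) / (2 * y) = 1 + -1 * y⁻¹ by field_simp; ring] at h
  · have h := hdInv_le_log_one_add_two_mul hy0.le
    rw [← sub_le_sub_iff_right (log (2 * y)), ← log_div (by linarith) (by positivity)] at h
    rwa [show (1 + 2 * y) / (2 * y) = 1 + 1 / 2 * y⁻¹ by field_simp; ring] at h

lemma log_one_add_div_le {a b : ℝ} (ha : 0 < a) (hb : 0 ≤ b) :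
    log (1 + b / a) ≤ log (1 + b) + log (2 + 1 / a) := by
  rw [← log_mul (by positivity) (by positivity)]
  refine log_le_log (by positivity) ?_
  have : b / a = b * (1 / a) := by ring
  nlinarith [mul_nonneg hb (one_div_pos.2 ha).le, one_div_pos.2 ha]

lemma mul_log_one_add_div_nonneg {a b : ℝ} (ha : 0 ≤ a) (hb : 0 ≤ b) :
    0 ≤ a * log (1 + b / a) :=
  mul_nonneg ha (log_nonneg (by linarith [div_nonneg hb ha]))

def rhobarTerm (a lam : ℝ) : ℝ := if a < lam then a * log (1 + lam / a) else lam

lemma rhobarTerm_div_two_le {a lam : ℝ} (ha : 0 ≤ a) (hl : 0 < lam) :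
    rhobarTerm a lam / 2 ≤ a * log (1 + lam / a) := by
  unfold rhobarTerm
  split_ifs with h
  · linarith [mul_log_one_add_div_nonneg ha hl.le]
  · have ha : 0 < a := hl.trans_le (not_lt.1 h)
    have hy : lam / a ≤ 1 := (div_le_one ha).2 (not_lt.1 h)
    have hy0 : 0 ≤ lam / a := by positivity
    have hlog := one_sub_inv_le_log_of_pos (by positivity : 0 < 1 + lam / a)
    have : 1 - (1 + lam / a)⁻¹ = lam / a / (1 + lam / a) := by field_simp; ring
    calc lam / 2 = a * (lam / a / 2) := by field_simp
      _ ≤ a * (lam / a / (1 + lam / a)) := by gcongr; linarith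
      _ ≤ a * log (1 + lam / a) := by gcongr; linarith

lemma mul_log_one_add_div_le_rhobarTerm {a lam : ℝ} (hl : 0 < lam) :
    a * log (1 + lam / a) ≤ rhobarTerm a lam := by
  unfold rhobarTerm
  split_ifs with h
  · exact le_rfl
  · have ha : 0 < a := hl.trans_le (not_lt.1 h)
    calc a * log (1 + lam / a) ≤ a * (lam / a) := by
          gcongr; linarith [log_le_sub_one_of_pos (by positivity : 0 < 1 + lam / a)]
      _ = lam := by field_simp

section Summation

variable {ι : Type*} {k : ι → ℝ}

lemma summable_mul_log_one_add_div (hk0 : ∀ j, 0 ≤ k j) (hk : Summable k)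
    (hlog : Summable fun j => k j * log (2 + 1 / k j)) {lam : ℝ} (hl : 0 ≤ lam) :
    Summable fun j => k j * log (1 + lam / k j) := by
  refine .of_nonneg_of_le (fun j => mul_log_one_add_div_nonneg (hk0 j) hl) (fun j => ?_)
    ((hk.mul_right (log (1 + lam))).add hlog)
  rcases (hk0 j).eq_or_lt with h | h
  · simp [← h]
  · rw [← mul_add]; exact mul_le_mul_of_nonneg_left (log_one_add_div_le h hl) h.le

lemma summable_mul_log_one_div (hk0 : ∀ j, 0 ≤ k j) (hk : Summable k)
    (hlog : Summable fun j => k j * log (2 + 1 / k j)) :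
    Summable fun j => k j * log (1 / k j) := by
  refine hlog.of_norm_bounded_eventually ?_
  filter_upwards [hk.tendsto_cofinite_zero.eventually_lt_const one_pos] with j hj
  rcases (hk0 j).eq_or_lt with h | h
  · simp [← h]
  · have hlog_nonneg : 0 ≤ log (1 / k j) := log_nonneg (by rw [le_div_iff₀ h]; linarith)
    rw [norm_mul, Real.norm_of_nonneg h.le, Real.norm_of_nonneg hlog_nonneg]
    exact mul_le_mul_of_nonneg_left (log_le_log (by positivity) (by linarith)) h.le

/-- Dominated convergence: each term tends to `0`, and is at most `k j` once `lam / k j` is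
large, which holds for all `j` simultaneously since `k j ≤ ∑ k`. -/
lemma tendsto_tsum_mul_comp_div {f : ℝ → ℝ} (hk0 : ∀ j, 0 ≤ k j) (hk : Summable k)
    (hf : Tendsto f atTop (𝓝 0)) :
    Tendsto (fun lam => ∑' j, k j * f (lam / k j)) atTop (𝓝 0) := by
  obtain ⟨a, ha⟩ := eventually_atTop.1 (hf.eventually (Metric.ball_mem_nhds 0 one_pos))
  have key := tendsto_tsum_of_dominated_convergence (𝓕 := atTop)
    (f := fun lam j => k j * f (lam / k j)) (g := fun _ => 0) hk (fun j => ?_) ?_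
  · simpa using key
  · rcases (hk0 j).eq_or_lt with h | h
    · simp [← h]
    · simpa using (hf.comp (tendsto_id.atTop_div_const h)).const_mul (k j)
  · filter_upwards [eventually_ge_atTop (max a 0 * ∑' j, k j)] with lam hlam j
    rcases (hk0 j).eq_or_lt with h | h
    · simp [← h]
    · have hy : a ≤ lam / k j := by
        rw [le_div_iff₀ h]
        calc a * k j ≤ max a 0 * k j := by gcongr; exact le_max_left a 0
          _ ≤ max a 0 * ∑' j, k j :=
              mul_le_mul_of_nonneg_left (hk.le_tsum j fun i _ => hk0 i) (le_max_right a 0)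
          _ ≤ lam := hlam
      rw [norm_mul, Real.norm_of_nonneg h.le]
      exact mul_le_of_le_one_right h.le (mem_ball_zero_iff.1 (ha _ hy)).le

lemma summable_rhobarTerm (hk0 : ∀ j, 0 ≤ k j) (hk : Summable k)
    (hlog : Summable fun j => k j * log (2 + 1 / k j)) {lam : ℝ} (hl : 0 < lam) :
    Summable fun j => rhobarTerm (k j) lam :=
  .of_nonneg_of_le
    (fun j => by
      unfold rhobarTerm; split_ifs
      exacts [mul_log_one_add_div_nonneg (hk0 j) hl.le, hl.le])
    (fun j => by linarith [rhobarTerm_div_two_le (hk0 j) hl])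
    ((summable_mul_log_one_add_div hk0 hk hlog hl.le).mul_left 2)

end Summation

section Rho

variable {k : ℤ → ℝ}

lemma rho_zero : rho k 0 = 0 := if_pos le_rfl

lemma rho_eqOn_tsum : EqOn (rho k) (fun lam => ∑' j, k j * HDinv (lam / k j)) (Ici 0) := by
  intro lam (hl : 0 ≤ lam)
  rcases hl.eq_or_lt with rfl | hl
  · simp [rho_zero, hdInv_zero]
  · exact if_neg hl.not_ge

lemma mul_hdInv_div_nonneg {a lam : ℝ} (ha : 0 ≤ a) (hl : 0 ≤ lam) : 0 ≤ a * HDinv (lam / a) :=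
  mul_nonneg ha (hdInv_nonneg (div_nonneg hl ha))

lemma monotone_mul_hdInv_div {a : ℝ} (ha : 0 ≤ a) : Monotone fun lam => a * HDinv (lam / a) :=
  fun _ _ h => mul_le_mul_of_nonneg_left (hdInv_strictMono.monotone (by gcongr)) ha

lemma mul_hdInv_div_le {a lam : ℝ} (ha : 0 ≤ a) (hl : 0 ≤ lam) :
    a * HDinv (lam / a) ≤ 2 * (a * log (1 + lam / a)) := by
  rw [mul_left_comm]
  exact mul_le_mul_of_nonneg_left (hdInv_le_two_mul_log_one_add (div_nonneg hl ha)) ha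

lemma le_mul_hdInv_div {a lam : ℝ} (ha : 0 ≤ a) (hl : 0 ≤ lam) :
    a * log (1 + lam / a) / 2 ≤ a * HDinv (lam / a) := by
  rw [mul_div_assoc]
  exact mul_le_mul_of_nonneg_left (log_one_add_div_two_le_hdInv (div_nonneg hl ha)) ha

lemma summable_mul_hdInv_div (hk : IsKernel k)
    (hlog : Summable fun j : ℤ => k j * log (2 + 1 / k j)) {lam : ℝ} (hl : 0 ≤ lam) :
    Summable fun j => k j * HDinv (lam / k j) :=
  .of_nonneg_of_le (fun j => mul_hdInv_div_nonneg (hk.nonneg j) hl)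
    (fun j => mul_hdInv_div_le (hk.nonneg j) hl)
    ((summable_mul_log_one_add_div hk.nonneg hk.summable hlog hl).mul_left 2)

lemma rho_strictMonoOn (hk : IsKernel k)
    (hlog : Summable fun j : ℤ => k j * log (2 + 1 / k j)) :
    StrictMonoOn (rho k) (Ici 0) := by
  intro a ha b hb hab
  rw [rho_eqOn_tsum ha, rho_eqOn_tsum hb]
  obtain ⟨j₀, hj₀⟩ := hk.nontrivial
  have hpos : 0 < k j₀ := (hk.nonneg j₀).lt_of_ne' hj₀
  exact Summable.tsum_lt_tsum (i := j₀) (fun j => monotone_mul_hdInv_div (hk.nonneg j) hab.le)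
    (mul_lt_mul_of_pos_left (hdInv_strictMono (by gcongr)) hpos)
    (summable_mul_hdInv_div hk hlog ha) (summable_mul_hdInv_div hk hlog hb)

/-- On `[0, R)` every term is dominated by its value at `R` (the terms are monotone), so the
series converges uniformly there. -/
lemma rho_continuousOn (hk : IsKernel k)
    (hlog : Summable fun j : ℤ => k j * log (2 + 1 / k j)) :
    ContinuousOn (rho k) (Ici 0) := by
  refine ContinuousOn.congr (continuousOn_of_locally_continuousOn fun x hx => ?_) rho_eqOn_tsum
  refine ⟨Iio (x + 1), isOpen_Iio, by simp, continuousOn_tsum (fun j => ?_)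
    (summable_mul_hdInv_div hk hlog (lam := x + 1) (by linarith [hx.out])) ?_⟩
  · exact (continuous_const.mul (hdInv_continuous.comp (continuous_id.div_const _))).continuousOn
  · rintro j lam ⟨hl, hlR⟩
    rw [Real.norm_of_nonneg (mul_hdInv_div_nonneg (hk.nonneg j) hl)]
    exact monotone_mul_hdInv_div (hk.nonneg j) hlR.out.le

lemma mul_log_two_mul_div (a : ℝ) {b : ℝ} (hb : b ≠ 0) :
    a * log (2 * (b / a)) = a * log (2 * b) + a * log (1 / a) := by
  rcases eq_or_ne a 0 with rfl | ha
  · simp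
  · rw [← mul_add, ← log_mul (by positivity) (by simpa using ha)]
    congr 2
    field_simp

lemma tendsto_rho_sub_mul_log (hk : IsKernel k)
    (hlog : Summable fun j : ℤ => k j * log (2 + 1 / k j)) :
    Tendsto (fun lam => rho k lam - (∑' j : ℤ, k j) * log (2 * lam)) atTop
      (𝓝 (∑' j : ℤ, k j * log (1 / k j))) := by
  have hsum := summable_mul_log_one_div hk.nonneg hk.summable hlog
  have key := (tendsto_tsum_mul_comp_div hk.nonneg hk.summable tendsto_hdInv_sub_log).add_const
    (∑' j : ℤ, k j * log (1 / k j))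
  rw [zero_add] at key
  refine key.congr' ?_
  filter_upwards [eventually_gt_atTop 0] with lam hl
  have hterm : ∀ j, k j * (HDinv (lam / k j) - log (2 * (lam / k j))) =
      k j * HDinv (lam / k j) - k j * log (2 * lam) - k j * log (1 / k j) := fun j => by
    rw [mul_sub, mul_log_two_mul_div _ hl.ne']; ring
  rw [rho_eqOn_tsum hl.le, tsum_congr hterm,
    Summable.tsum_sub ((summable_mul_hdInv_div hk hlog hl.le).sub (hk.summable.mul_right _)) hsum,
    Summable.tsum_sub (summable_mul_hdInv_div hk hlog hl.le) (hk.summable.mul_right _),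
    tsum_mul_right]
  ring

lemma tendsto_rho_atTop (hk : IsKernel k)
    (hlog : Summable fun j : ℤ => k j * log (2 + 1 / k j)) :
    Tendsto (rho k) atTop atTop := by
  obtain ⟨j₀, hj₀⟩ := hk.nontrivial
  have hK : 0 < ∑' j, k j :=
    hk.summable.tsum_pos hk.nonneg j₀ ((hk.nonneg j₀).lt_of_ne' hj₀)
  have hlog_top : Tendsto (fun lam => (∑' j, k j) * log (2 * lam)) atTop atTop :=
    (tendsto_log_atTop.comp (tendsto_id.const_mul_atTop two_pos)).const_mul_atTop hK
  simpa using (tendsto_rho_sub_mul_log hk hlog).add_atTop hlog_top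

lemma rho_bijOn (hk : IsKernel k)
    (hlog : Summable fun j : ℤ => k j * log (2 + 1 / k j)) :
    BijOn (rho k) (Ici 0) (Ici 0) := by
  have hmono := rho_strictMonoOn hk hlog
  refine ⟨fun x hx => ?_, hmono.injOn, fun y hy => ?_⟩
  · exact rho_zero (k := k) ▸ hmono.monotoneOn self_mem_Ici hx hx
  · exact intermediate_value_Ici (rho_continuousOn hk hlog) (tendsto_rho_atTop hk hlog)
      (by rwa [rho_zero])

lemma rhobar1_add_rhobar2 (hk : IsKernel k)
    (hlog : Summable fun j : ℤ => k j * log (2 + 1 / k j)) {lam : ℝ} (hl : 0 < lam) :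
    rhobar1 k lam + rhobar2 k lam = ∑' j, rhobarTerm (k j) lam := by
  have hsplit : ∀ j, ((if k j < lam then k j * log (1 + lam / k j) else 0) +
      if lam ≤ k j then lam else 0) = rhobarTerm (k j) lam := fun j => by
    by_cases h : k j < lam <;> simp [rhobarTerm, h, not_le.2, le_of_not_gt]
  have h₁ : ∀ j, 0 ≤ if k j < lam then k j * log (1 + lam / k j) else 0 := fun j => by
    split_ifs
    exacts [mul_log_one_add_div_nonneg (hk.nonneg j) hl.le, le_rfl]
  have h₂ : ∀ j, 0 ≤ if lam ≤ k j then lam else 0 := fun j => by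
    split_ifs
    exacts [hl.le, le_rfl]
  have hb := summable_rhobarTerm hk.nonneg hk.summable hlog hl
  rw [rhobar1, rhobar2, ← Summable.tsum_add
    (.of_nonneg_of_le h₁ (fun j => hsplit j ▸ le_add_of_nonneg_right (h₂ j)) hb)
    (.of_nonneg_of_le h₂ (fun j => hsplit j ▸ le_add_of_nonneg_left (h₁ j)) hb)]
  exact tsum_congr hsplit

lemma rho_comparison (hk : IsKernel k)
    (hlog : Summable fun j : ℤ => k j * log (2 + 1 / k j)) {lam : ℝ} (hl : 0 < lam) :
    1 / 4 * (rhobar1 k lam + rhobar2 k lam) ≤ rho k lam ∧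
      rho k lam ≤ 2 * (rhobar1 k lam + rhobar2 k lam) := by
  have hb := summable_rhobarTerm hk.nonneg hk.summable hlog hl
  have ht := summable_mul_hdInv_div hk hlog hl.le
  rw [rhobar1_add_rhobar2 hk hlog hl, rho_eqOn_tsum hl.le, ← tsum_mul_left, ← tsum_mul_left]
  constructor
  · refine Summable.tsum_le_tsum (fun j => ?_) (hb.mul_left _) ht
    calc 1 / 4 * rhobarTerm (k j) lam = rhobarTerm (k j) lam / 2 / 2 := by ring
      _ ≤ k j * log (1 + lam / k j) / 2 := by
          gcongr; exact rhobarTerm_div_two_le (hk.nonneg j) hl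
      _ ≤ k j * HDinv (lam / k j) := le_mul_hdInv_div (hk.nonneg j) hl.le
  · refine Summable.tsum_le_tsum (fun j => ?_) ht (hb.mul_left _)
    exact (mul_hdInv_div_le (hk.nonneg j) hl.le).trans
      (mul_le_mul_of_nonneg_left (mul_log_one_add_div_le_rhobarTerm hl) two_pos.le)

end Rho

/-- Lemma (properties of `ρ`): if `∑_{j∈S} k(j) log(2 + 1/k(j)) < ∞`, then `ρ` is a strictly
increasing continuous bijection of `[0,∞)` onto itself,
`ρ(λ) − |k|₁ log(2λ) → ∑_{j∈S} k(j) log(1/k(j))` as `λ → ∞`, and `ρ` is comparable to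
`ρ̄₁ + ρ̄₂` from above and below. -/
theorem rho_properties (k : ℤ → ℝ) (hk : IsKernel k)
    (hlog : Summable fun j : ℤ => k j * Real.log (2 + 1 / k j)) :
    (StrictMonoOn (rho k) (Ici 0) ∧ ContinuousOn (rho k) (Ici 0) ∧
      Set.BijOn (rho k) (Ici 0) (Ici 0)) ∧
    Tendsto (fun lam => rho k lam - (∑' j : ℤ, k j) * Real.log (2 * lam)) atTop
      (nhds (∑' j : ℤ, k j * Real.log (1 / k j))) ∧
    (∃ C₁ C₂ : ℝ, 0 < C₁ ∧ 0 < C₂ ∧ ∀ lam : ℝ, 0 < lam →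
      C₁ * (rhobar1 k lam + rhobar2 k lam) ≤ rho k lam ∧
      rho k lam ≤ C₂ * (rhobar1 k lam + rhobar2 k lam)) :=
  ⟨⟨rho_strictMonoOn hk hlog, rho_continuousOn hk hlog, rho_bijOn hk hlog⟩,
    tendsto_rho_sub_mul_log hk hlog,
    1 / 4, 2, by norm_num, two_pos, fun _ hl => rho_comparison hk hlog hl⟩
end
end

section
/- Let γ ≥ 2, δ > 0, M > 0 and c > 0, and define F̂: [0,∞) → [0,∞) by F̂(x) = e^{δM}·x^γ for x ∈ [0,M] and F̂(x) = M^γ·e^{δx} for x > M; set F̃ = c·F̂, t_* = M^{−γ}·e^{−δM}/(cδ) and C = M^{−γ}(M − (γ−1)/δ). Define φ: (0,∞) → ℝ by φ(t) = −(1/δ)·log(cδM^γ t) for t ∈ (0,t_*] and φ(t) = (c(γ−1)e^{δM} t + C)^{−1/(γ−1)} for t > t_*. Then φ is the relaxation function corresponding to F̃; that is, φ is strictly positive on (0,∞), differentiable with φ'(t) = −F̃(φ(t)) for all t > 0, and φ(t) → ∞ as t → 0+. -/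
/-!
For `t ≤ t_*` the function `φ` is the explicit solution `-(1/δ) log (cδM^γ t)` of the
exponential ODE `φ' = -c M^γ e^{δφ}`, and for `t ≥ t_*` it is the explicit solution
`(A t + C)^{-1/(γ-1)}` of the power ODE `φ' = -c e^{δM} φ^γ`. Both branches are decreasing and
take the value `M` at `t_*`, which is exactly what `t_*` and `C` are chosen for; so the
exponential branch lives in `[M, ∞)`, where `F̂` is exponential, and the power branch in `(0, M]`,
where `F̂` is a power. At `t_*` the two one-sided derivatives are both `-c e^{δM} M^γ`, and the
blow-up at `0+` is that of the logarithm.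
-/

open Filter Set Topology Real

namespace RelaxationFunction

lemma hasDerivAt_of_eqOn_Iic_of_eqOn_Ici {f g h : ℝ → ℝ} {a d : ℝ} (hg : HasDerivAt g d a)
    (hh : HasDerivAt h d a) (hfg : EqOn f g (Iic a)) (hfh : EqOn f h (Ici a)) :
    HasDerivAt f d a := by
  have := (hg.hasDerivWithinAt.congr_of_mem hfg self_mem_Iic).union
    (hh.hasDerivWithinAt.congr_of_mem hfh self_mem_Ici)
  rwa [Iic_union_Ici, hasDerivWithinAt_univ] at this

section Branches

variable {γ δ k A C t : ℝ}

noncomputable def logBranch (δ k t : ℝ) : ℝ := -(1 / δ) * log (k * t)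

noncomputable def powBranch (γ A C t : ℝ) : ℝ := (A * t + C) ^ (-(1 / (γ - 1)))

lemma exp_mul_logBranch (hδ : δ ≠ 0) (hkt : 0 < k * t) :
    exp (δ * logBranch δ k t) = (k * t)⁻¹ := by
  rw [logBranch, ← mul_assoc, mul_neg, mul_one_div_cancel hδ, neg_one_mul, exp_neg, exp_log hkt]

lemma hasDerivAt_logBranch (hδ : δ ≠ 0) (hkt : 0 < k * t) :
    HasDerivAt (logBranch δ k) (-(k / δ) * exp (δ * logBranch δ k t)) t := by
  have hk : k ≠ 0 := by rintro rfl; simp at hkt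
  have ht : t ≠ 0 := by rintro rfl; simp at hkt
  rw [exp_mul_logBranch hδ hkt]
  refine ((((hasDerivAt_id' t).const_mul k).log hkt.ne').const_mul (-(1 / δ))).congr_deriv ?_
  field_simp

lemma logBranch_antitoneOn (hδ : 0 < δ) (hk : 0 < k) : AntitoneOn (logBranch δ k) (Ioi 0) :=
  fun s hs _ _ hst => mul_le_mul_of_nonpos_left
    (log_le_log (mul_pos hk hs) (mul_le_mul_of_nonneg_left hst hk.le))
    (neg_nonpos.2 (by positivity))

lemma tendsto_logBranch_nhdsGT_zero (hδ : 0 < δ) (hk : 0 < k) :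
    Tendsto (logBranch δ k) (𝓝[>] 0) atTop := by
  have hmul : Tendsto (k * ·) (𝓝[>] 0) (𝓝[>] 0) := by
    refine tendsto_nhdsWithin_of_tendsto_nhds_of_eventually_within _ ?_ ?_
    · simpa using ((continuous_const_mul k).tendsto 0).mono_left nhdsWithin_le_nhds
    · filter_upwards [self_mem_nhdsWithin] with s hs using mul_pos hk hs
  exact (tendsto_log_nhdsGT_zero.comp hmul).const_mul_atBot_of_neg
    (neg_lt_zero.2 (by positivity))

lemma hasDerivAt_powBranch (hγ : γ ≠ 1) (h : 0 < A * t + C) :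
    HasDerivAt (powBranch γ A C) (-(A / (γ - 1)) * powBranch γ A C t ^ γ) t := by
  have hγ' : γ - 1 ≠ 0 := sub_ne_zero.2 hγ
  refine ((((hasDerivAt_id' t).const_mul A).add_const C).rpow_const
    (p := -(1 / (γ - 1))) (Or.inl h.ne')).congr_deriv ?_
  rw [powBranch, ← rpow_mul h.le, show -(1 / (γ - 1)) * γ = -(1 / (γ - 1)) - 1 by
    field_simp; ring]
  ring

end Branches

section Model

variable {γ δ M c t : ℝ}

noncomputable def crossover (γ δ M x : ℝ) : ℝ :=
  if x ≤ M then exp (δ * M) * x ^ γ else M ^ γ * exp (δ * x)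

lemma crossover_of_le {x : ℝ} (h : x ≤ M) : crossover γ δ M x = exp (δ * M) * x ^ γ := if_pos h

lemma crossover_of_ge {x : ℝ} (h : M ≤ x) : crossover γ δ M x = M ^ γ * exp (δ * x) := by
  rcases h.eq_or_lt with rfl | h
  · rw [crossover, if_pos le_rfl, mul_comm]
  · exact if_neg h.not_ge

noncomputable def tStar (γ δ M c : ℝ) : ℝ := M ^ (-γ) * exp (-(δ * M)) / (c * δ)

noncomputable def powOffset (γ δ M : ℝ) : ℝ := M ^ (-γ) * (M - (γ - 1) / δ)

noncomputable def relaxation (γ δ M c t : ℝ) : ℝ :=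
  if t ≤ tStar γ δ M c then logBranch δ (c * δ * M ^ γ) t
  else powBranch γ (c * (γ - 1) * exp (δ * M)) (powOffset γ δ M) t

lemma tStar_pos (hδ : 0 < δ) (hM : 0 < M) (hc : 0 < c) : 0 < tStar γ δ M c := by
  unfold tStar; positivity

lemma logBranch_tStar (hδ : 0 < δ) (hM : 0 < M) (hc : 0 < c) :
    logBranch δ (c * δ * M ^ γ) (tStar γ δ M c) = M := by
  have hk : c * δ * M ^ γ * tStar γ δ M c = exp (-(δ * M)) := by
    rw [tStar, rpow_neg hM.le]
    field_simp
  rw [logBranch, hk, log_exp]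
  field_simp

lemma powOffset_add_tStar (hδ : 0 < δ) (hM : 0 < M) (hc : 0 < c) :
    c * (γ - 1) * exp (δ * M) * tStar γ δ M c + powOffset γ δ M = M ^ (1 - γ) := by
  rw [tStar, powOffset, rpow_sub hM, rpow_one, rpow_neg hM.le, exp_neg]
  field_simp
  ring

lemma powBranch_tStar (hγ : 1 < γ) (hδ : 0 < δ) (hM : 0 < M) (hc : 0 < c) :
    powBranch γ (c * (γ - 1) * exp (δ * M)) (powOffset γ δ M) (tStar γ δ M c) = M := by
  have hγ' : γ - 1 ≠ 0 := by linarith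
  rw [powBranch, powOffset_add_tStar hδ hM hc, ← rpow_mul hM.le,
    show (1 - γ) * -(1 / (γ - 1)) = 1 by field_simp; ring, rpow_one]

lemma le_logBranch (hδ : 0 < δ) (hM : 0 < M) (hc : 0 < c) (ht : 0 < t)
    (hts : t ≤ tStar γ δ M c) : M ≤ logBranch δ (c * δ * M ^ γ) t :=
  (logBranch_tStar hδ hM hc).ge.trans <|
    logBranch_antitoneOn (k := c * δ * M ^ γ) hδ (by positivity) ht (tStar_pos hδ hM hc) hts

lemma powOffset_add_pos (hγ : 1 < γ) (hδ : 0 < δ) (hM : 0 < M) (hc : 0 < c)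
    (hts : tStar γ δ M c ≤ t) : 0 < c * (γ - 1) * exp (δ * M) * t + powOffset γ δ M := by
  have hA : 0 ≤ c * (γ - 1) * exp (δ * M) :=
    mul_nonneg (mul_nonneg hc.le (by linarith)) (exp_pos _).le
  calc 0 < M ^ (1 - γ) := rpow_pos_of_pos hM _
    _ = c * (γ - 1) * exp (δ * M) * tStar γ δ M c + powOffset γ δ M :=
      (powOffset_add_tStar hδ hM hc).symm
    _ ≤ c * (γ - 1) * exp (δ * M) * t + powOffset γ δ M := by gcongr

lemma powBranch_le (hγ : 1 < γ) (hδ : 0 < δ) (hM : 0 < M) (hc : 0 < c)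
    (hts : tStar γ δ M c ≤ t) :
    powBranch γ (c * (γ - 1) * exp (δ * M)) (powOffset γ δ M) t ≤ M := by
  have hA : 0 ≤ c * (γ - 1) * exp (δ * M) :=
    mul_nonneg (mul_nonneg hc.le (by linarith)) (exp_pos _).le
  calc powBranch γ (c * (γ - 1) * exp (δ * M)) (powOffset γ δ M) t
      ≤ powBranch γ (c * (γ - 1) * exp (δ * M)) (powOffset γ δ M) (tStar γ δ M c) :=
        rpow_le_rpow_of_nonpos (powOffset_add_pos hγ hδ hM hc le_rfl) (by gcongr)
          (neg_nonpos.2 (one_div_nonneg.2 (by linarith)))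
    _ = M := powBranch_tStar hγ hδ hM hc

lemma hasDerivAt_logBranch_crossover (hδ : 0 < δ) (hM : 0 < M) (hc : 0 < c) (ht : 0 < t)
    (hts : t ≤ tStar γ δ M c) :
    HasDerivAt (logBranch δ (c * δ * M ^ γ))
      (-(c * crossover γ δ M (logBranch δ (c * δ * M ^ γ) t))) t := by
  rw [crossover_of_ge (le_logBranch hδ hM hc ht hts)]
  convert hasDerivAt_logBranch (k := c * δ * M ^ γ) (t := t) hδ.ne' (by positivity) using 1
  field_simp

lemma hasDerivAt_powBranch_crossover (hγ : 1 < γ) (hδ : 0 < δ) (hM : 0 < M) (hc : 0 < c)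
    (hts : tStar γ δ M c ≤ t) :
    HasDerivAt (powBranch γ (c * (γ - 1) * exp (δ * M)) (powOffset γ δ M))
      (-(c * crossover γ δ M
        (powBranch γ (c * (γ - 1) * exp (δ * M)) (powOffset γ δ M) t))) t := by
  have hγ' : γ - 1 ≠ 0 := by linarith
  rw [crossover_of_le (powBranch_le hγ hδ hM hc hts)]
  convert hasDerivAt_powBranch (t := t) hγ.ne' (powOffset_add_pos hγ hδ hM hc hts) using 1
  field_simp

lemma relaxation_of_le (h : t ≤ tStar γ δ M c) :
    relaxation γ δ M c t = logBranch δ (c * δ * M ^ γ) t :=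
  if_pos h

lemma relaxation_of_ge (hγ : 1 < γ) (hδ : 0 < δ) (hM : 0 < M) (hc : 0 < c)
    (h : tStar γ δ M c ≤ t) :
    relaxation γ δ M c t = powBranch γ (c * (γ - 1) * exp (δ * M)) (powOffset γ δ M) t := by
  rcases h.eq_or_lt with rfl | h
  · rw [relaxation_of_le le_rfl, logBranch_tStar hδ hM hc, powBranch_tStar hγ hδ hM hc]
  · exact if_neg h.not_ge

lemma relaxation_pos (hγ : 1 < γ) (hδ : 0 < δ) (hM : 0 < M) (hc : 0 < c) (ht : 0 < t) :
    0 < relaxation γ δ M c t := by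
  rcases le_total t (tStar γ δ M c) with h | h
  · exact (relaxation_of_le h).symm ▸ hM.trans_le (le_logBranch hδ hM hc ht h)
  · exact (relaxation_of_ge hγ hδ hM hc h).symm ▸
      rpow_pos_of_pos (powOffset_add_pos hγ hδ hM hc h) _

lemma hasDerivAt_relaxation (hγ : 1 < γ) (hδ : 0 < δ) (hM : 0 < M) (hc : 0 < c) (ht : 0 < t) :
    HasDerivAt (relaxation γ δ M c) (-(c * crossover γ δ M (relaxation γ δ M c t))) t := by
  rcases lt_trichotomy t (tStar γ δ M c) with hlt | rfl | hgt
  · rw [relaxation_of_le hlt.le]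
    exact (hasDerivAt_logBranch_crossover hδ hM hc ht hlt.le).congr_of_eventuallyEq <|
      eventually_of_mem (Iio_mem_nhds hlt) fun s hs => relaxation_of_le (le_of_lt hs)
  · have hlog := hasDerivAt_logBranch_crossover hδ hM hc ht le_rfl
    have hpow := hasDerivAt_powBranch_crossover hγ hδ hM hc le_rfl
    rw [logBranch_tStar hδ hM hc] at hlog
    rw [powBranch_tStar hγ hδ hM hc] at hpow
    rw [relaxation_of_le le_rfl, logBranch_tStar hδ hM hc]
    exact hasDerivAt_of_eqOn_Iic_of_eqOn_Ici hlog hpow (fun s hs => relaxation_of_le hs)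
      fun s hs => relaxation_of_ge hγ hδ hM hc hs
  · rw [relaxation_of_ge hγ hδ hM hc hgt.le]
    exact (hasDerivAt_powBranch_crossover hγ hδ hM hc hgt.le).congr_of_eventuallyEq <|
      eventually_of_mem (Ioi_mem_nhds hgt) fun s hs => relaxation_of_ge hγ hδ hM hc (le_of_lt hs)

lemma tendsto_relaxation_nhdsGT_zero (hδ : 0 < δ) (hM : 0 < M) (hc : 0 < c) :
    Tendsto (relaxation γ δ M c) (𝓝[>] 0) atTop :=
  (tendsto_logBranch_nhdsGT_zero (k := c * δ * M ^ γ) hδ (by positivity)).congr' <| by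
    filter_upwards [Ioc_mem_nhdsGT (tStar_pos hδ hM hc)] with t ht
    exact (relaxation_of_le ht.2).symm

end Model

end RelaxationFunction

open RelaxationFunction in
/-- Lemma (explicit relaxation function): for `F̂(x) = e^{δM} x^γ` on `[0,M]`,
`F̂(x) = M^γ e^{δx}` for `x > M`, `F̃ = c F̂`, the function `φ` given by
`φ(t) = −(1/δ) log(cδM^γ t)` on `(0,t_*]` and
`φ(t) = (c(γ−1)e^{δM} t + C)^{−1/(γ−1)}` for `t > t_*`, with
`t_* = M^{−γ} e^{−δM}/(cδ)` and `C = M^{−γ}(M − (γ−1)/δ)`, is the relaxation function of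
`F̃`: it is strictly positive, solves `φ' = −F̃(φ)` on `(0,∞)` and blows up at `0+`. -/
theorem relaxation_function (γ δ M c : ℝ) (hγ : 2 ≤ γ) (hδ : 0 < δ) (hM : 0 < M) (hc : 0 < c)
    (Fhat : ℝ → ℝ)
    (hFhat : ∀ x : ℝ, 0 ≤ x →
      Fhat x = if x ≤ M then Real.exp (δ * M) * x ^ γ else M ^ γ * Real.exp (δ * x))
    (tstar Cc : ℝ)
    (htstar : tstar = M ^ (-γ) * Real.exp (-(δ * M)) / (c * δ))
    (hCc : Cc = M ^ (-γ) * (M - (γ - 1) / δ))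
    (φ : ℝ → ℝ)
    (hφ : ∀ t : ℝ, 0 < t →
      φ t = if t ≤ tstar then -(1 / δ) * Real.log (c * δ * M ^ γ * t)
        else (c * (γ - 1) * Real.exp (δ * M) * t + Cc) ^ (-(1 / (γ - 1)))) :
    (∀ t, 0 < t → 0 < φ t) ∧
    (∀ t, 0 < t → HasDerivAt φ (-(c * Fhat (φ t))) t) ∧
    Tendsto φ (nhdsWithin 0 (Ioi 0)) atTop := by
  obtain rfl : tstar = tStar γ δ M c := htstar
  obtain rfl : Cc = powOffset γ δ M := hCc
  have hγ1 : 1 < γ := by linarith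
  have hφ_eq : EqOn φ (relaxation γ δ M c) (Ioi 0) := hφ
  have hφ_pos : ∀ t, 0 < t → 0 < φ t := fun t ht =>
    (hφ_eq ht).symm ▸ relaxation_pos hγ1 hδ hM hc ht
  refine ⟨hφ_pos, fun t ht => ?_, ?_⟩
  · rw [hFhat _ (hφ_pos t ht).le, hφ_eq ht]
    exact (hasDerivAt_relaxation hγ1 hδ hM hc ht).congr_of_eventuallyEq <|
      eventually_of_mem (Ioi_mem_nhds ht) hφ_eq
  · exact (tendsto_relaxation_nhdsGT_zero hδ hM hc).congr' <|
      eventually_of_mem self_mem_nhdsWithin fun t ht => (hφ_eq ht).symm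
end

section
/- Let γ ≥ 2 and F_γ(x) = |x|^γ for x ∈ ℝ. (i) For all p, q > 1 with 1/p + 1/q = 1 and all x, y ∈ ℝ: F_γ(x+y) ≤ p^{γ−1}·F_γ(x) + q^{γ−1}·F_γ(y). (ii) For every δ > 0, every λ ≥ 1 and all x, y ∈ ℝ: F_γ(x+y) ≤ C̃·λ^{γ−1}·F_γ(x) + (1 + δ/λ)·F_γ(y), where C̃ = ((1+δ)(γ−1)/δ)^{γ−1}. -/
/-!
Part (i) is the convexity of `t ↦ t ^ γ` on `[0, ∞)` applied to `|x| + |y| = p⁻¹ (p|x|) + q⁻¹ (q|y|)`.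
For part (ii) take `ε = δ/λ` and `q = (1 + ε) ^ θ` with `θ = 1/(γ-1) ≤ 1`, so that `q ^ (γ-1) = 1 + ε`;
Bernoulli's inequality `(1 + ε) ^ (1-θ) ≤ 1 + (1-θ) ε` bounds the conjugate exponent by
`p ≤ (γ-1)(1+ε)/ε`, and `λ ≥ 1` gives `(γ-1)(1+ε)/ε ≤ (1+δ)(γ-1)λ/δ`.
-/

open Real

lemma inv_mul_mul_rpow_eq {p a : ℝ} (hp : 0 < p) (ha : 0 ≤ a) (γ : ℝ) :
    p⁻¹ * (p * a) ^ γ = p ^ (γ - 1) * a ^ γ := by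
  rw [mul_rpow hp.le ha, rpow_sub hp, rpow_one]
  ring

theorem abs_add_rpow_le_of_inv_add_inv {γ p q : ℝ} (hγ : 1 ≤ γ) (hp : 0 < p) (hq : 0 < q)
    (hpq : p⁻¹ + q⁻¹ = 1) (x y : ℝ) :
    |x + y| ^ γ ≤ p ^ (γ - 1) * |x| ^ γ + q ^ (γ - 1) * |y| ^ γ := by
  have hsplit : |x| + |y| = p⁻¹ * (p * |x|) + q⁻¹ * (q * |y|) := by
    field_simp
  calc |x + y| ^ γ ≤ (|x| + |y|) ^ γ :=
        rpow_le_rpow (abs_nonneg _) (abs_add_le x y) (by linarith)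
    _ = (p⁻¹ • (p * |x|) + q⁻¹ • (q * |y|)) ^ γ := by rw [hsplit, smul_eq_mul, smul_eq_mul]
    _ ≤ p⁻¹ • (p * |x|) ^ γ + q⁻¹ • (q * |y|) ^ γ :=
        (convexOn_rpow hγ).2 (by positivity : (0 : ℝ) ≤ p * |x|)
          (by positivity : (0 : ℝ) ≤ q * |y|) (by positivity) (by positivity) hpq
    _ = p ^ (γ - 1) * |x| ^ γ + q ^ (γ - 1) * |y| ^ γ := by
        rw [smul_eq_mul, smul_eq_mul, inv_mul_mul_rpow_eq hp (abs_nonneg x),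
          inv_mul_mul_rpow_eq hq (abs_nonneg y)]

lemma mul_div_one_add_le_one_sub_rpow_neg {θ t : ℝ} (hθ₀ : 0 ≤ θ) (hθ₁ : θ ≤ 1) (ht : 0 ≤ t) :
    θ * t / (1 + t) ≤ 1 - (1 + t) ^ (-θ) := by
  have ht₁ : 0 < 1 + t := by linarith
  have hbernoulli : (1 + t) ^ (1 - θ) ≤ 1 + (1 - θ) * t :=
    rpow_one_add_le_one_add_mul_self (by linarith) (by linarith) (by linarith)
  have hsplit : (1 + t) ^ (-θ) = (1 + t) ^ (1 - θ) / (1 + t) := by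
    rw [rpow_sub ht₁, rpow_one, rpow_neg ht₁.le]
    field_simp
  have hbound : (1 + t) ^ (-θ) ≤ 1 - θ * t / (1 + t) :=
    calc (1 + t) ^ (-θ) = (1 + t) ^ (1 - θ) / (1 + t) := hsplit
      _ ≤ (1 + (1 - θ) * t) / (1 + t) := by gcongr
      _ = 1 - θ * t / (1 + t) := by field_simp; ring
  linarith

theorem abs_add_rpow_le_const_mul_add_one_add_mul {γ ε : ℝ} (hγ : 2 ≤ γ) (hε : 0 < ε) (x y : ℝ) :
    |x + y| ^ γ ≤ ((γ - 1) * (1 + ε) / ε) ^ (γ - 1) * |x| ^ γ + (1 + ε) * |y| ^ γ := by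
  set θ := (γ - 1)⁻¹ with hθ
  have hθ₀ : 0 < θ := inv_pos.2 (by linarith)
  have hθ₁ : θ ≤ 1 := inv_le_one_of_one_le₀ (by linarith)
  have hε₁ : 0 < 1 + ε := by linarith
  have hgap := mul_div_one_add_le_one_sub_rpow_neg hθ₀.le hθ₁ hε.le
  have hgap₀ : 0 < θ * ε / (1 + ε) := by positivity
  set q := (1 + ε) ^ θ
  set p := (1 - (1 + ε) ^ (-θ))⁻¹
  have hp : 0 < p := inv_pos.2 (hgap₀.trans_le hgap)
  have hpq : p⁻¹ + q⁻¹ = 1 := by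
    rw [inv_inv, ← rpow_neg hε₁.le]
    ring
  have hq_pow : q ^ (γ - 1) = 1 + ε := by
    rw [← rpow_mul hε₁.le, hθ, inv_mul_cancel₀ (by linarith), rpow_one]
  have hp_le : p ≤ (γ - 1) * (1 + ε) / ε :=
    calc p ≤ (θ * ε / (1 + ε))⁻¹ := inv_anti₀ hgap₀ hgap
      _ = (γ - 1) * (1 + ε) / ε := by
        rw [hθ]
        field_simp
  calc |x + y| ^ γ ≤ p ^ (γ - 1) * |x| ^ γ + q ^ (γ - 1) * |y| ^ γ :=
        abs_add_rpow_le_of_inv_add_inv (by linarith) hp (by positivity) hpq x y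
    _ ≤ ((γ - 1) * (1 + ε) / ε) ^ (γ - 1) * |x| ^ γ + (1 + ε) * |y| ^ γ := by
        rw [hq_pow]
        gcongr
        linarith

/-- Lemma (convexity inequalities for `F_γ(x) = |x|^γ`, `γ ≥ 2`):
(i) for `p, q > 1` with `1/p + 1/q = 1`,
`|x+y|^γ ≤ p^{γ−1}|x|^γ + q^{γ−1}|y|^γ`;
(ii) for `δ > 0` and `λ ≥ 1`,
`|x+y|^γ ≤ C̃ λ^{γ−1}|x|^γ + (1 + δ/λ)|y|^γ` with `C̃ = ((1+δ)(γ−1)/δ)^{γ−1}`. -/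
theorem Fgamma_inequalities (γ : ℝ) (hγ : 2 ≤ γ) :
    (∀ p q : ℝ, 1 < p → 1 < q → 1 / p + 1 / q = 1 → ∀ x y : ℝ,
      |x + y| ^ γ ≤ p ^ (γ - 1) * |x| ^ γ + q ^ (γ - 1) * |y| ^ γ) ∧
    (∀ δ : ℝ, 0 < δ → ∀ lam : ℝ, 1 ≤ lam → ∀ x y : ℝ,
      |x + y| ^ γ ≤ ((1 + δ) * (γ - 1) / δ) ^ (γ - 1) * lam ^ (γ - 1) * |x| ^ γ +
        (1 + δ / lam) * |y| ^ γ) := by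
  refine ⟨fun p q hp hq hpq x y => ?_, fun δ hδ lam hlam x y => ?_⟩
  · rw [one_div, one_div] at hpq
    exact abs_add_rpow_le_of_inv_add_inv (by linarith) (by linarith) (by linarith) hpq x y
  · have hlam₀ : 0 < lam := by linarith
    have hC : 0 ≤ (1 + δ) * (γ - 1) / δ := div_nonneg (by nlinarith) hδ.le
    have hconst : (γ - 1) * (1 + δ / lam) / (δ / lam) ≤ (1 + δ) * (γ - 1) / δ * lam := by
      field_simp
      nlinarith [mul_nonneg (mul_nonneg (by linarith : (0 : ℝ) ≤ γ - 1) hδ.le) (sub_nonneg.2 hlam)]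
    calc |x + y| ^ γ
        ≤ ((γ - 1) * (1 + δ / lam) / (δ / lam)) ^ (γ - 1) * |x| ^ γ + (1 + δ / lam) * |y| ^ γ :=
          abs_add_rpow_le_const_mul_add_one_add_mul hγ (by positivity) x y
      _ ≤ ((1 + δ) * (γ - 1) / δ * lam) ^ (γ - 1) * |x| ^ γ + (1 + δ / lam) * |y| ^ γ := by
          gcongr
          · exact div_nonneg (mul_nonneg (by linarith) (by positivity)) (by positivity)
          · linarith
      _ = _ := by rw [mul_rpow hC hlam₀.le]
end

section
/- Define H: ℝ × ℝ → ℝ by H(x,y) = (1/2)·e^{−x}·Υ(x+y), where Υ(r) = e^r − 1 − r. Let γ ≥ 2. Then there exists a constant ν > 0 depending only on γ such that y^γ ≤ ν·H(x,y) for all x, y ∈ [0,∞). -/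
noncomputable section

lemma Ups_mono (x y : ℝ) (hx : 0 ≤ x) (hy : 0 ≤ y) :
    Ups y ≤ Real.exp (-x) * Ups (x + y) := by
  have h1 : 1 + x ≤ Real.exp x := by linarith [Real.add_one_le_exp x]
  have h2 : Real.exp (-x) * Real.exp x = 1 := by
    rw [← Real.exp_add]; simp
  have h3 : Real.exp (-x) ≤ 1 := Real.exp_le_one_iff.mpr (by linarith)
  have h4 : 0 < Real.exp (-x) := Real.exp_pos _
  have h5 : Real.exp (-x) * Real.exp (x + y) = Real.exp y := by
    rw [← Real.exp_add]; ring_nf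
  unfold Ups
  have h6 : Real.exp (-x) * (1 + x) ≤ 1 := by
    nlinarith
  have h7 : Real.exp (-x) * y ≤ y := by nlinarith
  nlinarith

lemma sq_le_two_Ups (y : ℝ) (hy : 0 ≤ y) : y ^ 2 ≤ 2 * Ups y := by
  have := Real.quadratic_le_exp_of_nonneg hy
  unfold Ups; linarith

lemma exp_le_four_Ups (y : ℝ) (hy : 1 ≤ y) : Real.exp y ≤ 4 * Ups y := by
  -- e * y ≤ exp y
  have h1 : Real.exp 1 * y ≤ Real.exp y := by
    have := Real.add_one_le_exp (y - 1)
    have h := Real.exp_pos 1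
    calc Real.exp 1 * y = Real.exp 1 * (1 + (y - 1)) := by ring
    _ ≤ Real.exp 1 * Real.exp (y - 1) := by nlinarith
    _ = Real.exp y := by rw [← Real.exp_add]; ring_nf
  have he : (2.7182818283 : ℝ) < Real.exp 1 := Real.exp_one_gt_d9
  unfold Ups
  nlinarith [Real.exp_pos y]

lemma pow_le_factorial_exp (y : ℝ) (hy : 0 ≤ y) (n : ℕ) :
    y ^ n ≤ n.factorial * Real.exp y := by
  have hsum := Real.sum_le_exp_of_nonneg hy (n + 1)
  have hterm : y ^ n / (n.factorial : ℝ) ≤ ∑ i ∈ Finset.range (n + 1), y ^ i / i.factorial :=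
    Finset.single_le_sum (f := fun i => y ^ i / (i.factorial : ℝ))
      (fun i _ => by positivity) (Finset.self_mem_range_succ n)
  have hfac : (0 : ℝ) < n.factorial := by positivity
  have := hterm.trans hsum
  rw [div_le_iff₀ hfac] at this
  linarith

/-- Lemma: for `H(x,y) = (1/2) e^{−x} Υ(x+y)` and `γ ≥ 2`, there is `ν > 0` depending only on
`γ` such that `y^γ ≤ ν H(x,y)` for all `x, y ≥ 0`. -/
theorem Fgamma_le_H (γ : ℝ) (hγ : 2 ≤ γ) :
    ∃ ν : ℝ, 0 < ν ∧ ∀ x y : ℝ, 0 ≤ x → 0 ≤ y →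
      y ^ γ ≤ ν * ((1 / 2) * Real.exp (-x) * Ups (x + y)) := by
  set n : ℕ := ⌈γ⌉₊ with hn
  refine ⟨8 * n.factorial, by positivity, ?_⟩
  intro x y hx hy
  have hfac : (1 : ℝ) ≤ n.factorial := by exact_mod_cast n.factorial_pos
  -- main bound: y ^ γ ≤ (4 * n.factorial) * Ups y
  have hmain : y ^ γ ≤ (4 * n.factorial) * Ups y := by
    rcases le_or_gt y 1 with h1 | h1
    · -- y ≤ 1 : y^γ ≤ y^2 ≤ 2 Ups y
      have h2 : y ^ γ ≤ y ^ (2 : ℝ) := by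
        rcases eq_or_lt_of_le hy with h0 | h0
        · rw [← h0, Real.zero_rpow (by linarith), Real.zero_rpow (by norm_num)]
        · exact Real.rpow_le_rpow_of_exponent_ge h0 h1 hγ
      have h3 : y ^ (2 : ℝ) = y ^ (2 : ℕ) := by
        rw [← Real.rpow_natCast]; norm_num
      rw [h3] at h2
      have h4 := sq_le_two_Ups y hy
      have h5 : (0 : ℝ) ≤ Ups y := by nlinarith [sq_nonneg y]
      nlinarith [mul_nonneg (sub_nonneg.mpr hfac) h5]
    · -- 1 ≤ y
      have hγn : γ ≤ (n : ℝ) := Nat.le_ceil γ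
      have h2 : y ^ γ ≤ y ^ (n : ℝ) := Real.rpow_le_rpow_of_exponent_le h1.le hγn
      have h3 : y ^ (n : ℝ) = y ^ n := Real.rpow_natCast y n
      rw [h3] at h2
      have h4 := pow_le_factorial_exp y hy n
      have h5 := exp_le_four_Ups y h1.le
      have h6 : (0:ℝ) < n.factorial := by positivity
      nlinarith [Real.exp_pos y, mul_le_mul_of_nonneg_left h5 h6.le]
  have hmono := Ups_mono x y hx hy
  have hU : (0 : ℝ) ≤ Ups y := by nlinarith [sq_le_two_Ups y hy, sq_nonneg y]
  calc y ^ γ ≤ (4 * n.factorial) * Ups y := hmain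
    _ ≤ (4 * n.factorial) * (Real.exp (-x) * Ups (x + y)) := by
        apply mul_le_mul_of_nonneg_left hmono (by positivity)
    _ = 8 * n.factorial * ((1 / 2) * Real.exp (-x) * Ups (x + y)) := by ring
end
end

section
/- Let α ∈ (0,1] and R ∈ ℕ, and define ψ_R: ℤ → (0,1] by ψ_R(x) = (R/|x|)^α if |x| ≥ R and ψ_R(x) = 1 if |x| < R. Then for all x, y ∈ ℤ one has |ψ_R(x) − ψ_R(y)| / ψ_R(x) ≤ R^{−α}·|x−y|^α. -/
noncomputable section

/-- The weight function `ψ_R(x) = (R/|x|)^α` for `|x| ≥ R` and `ψ_R(x) = 1` for `|x| < R`. -/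
def psiR (α : ℝ) (R : ℕ) (x : ℤ) : ℝ :=
  if |x| < (R : ℤ) then 1 else ((R : ℝ) / |(x : ℝ)|) ^ α

lemma rpow_sub_rpow_le (α a b : ℝ) (hα0 : 0 < α) (hα1 : α ≤ 1) (ha : 0 ≤ a) (hab : a ≤ b) :
    b ^ α - a ^ α ≤ (b - a) ^ α := by
  have h := NNReal.rpow_add_le_add_rpow (Real.toNNReal a) (Real.toNNReal (b - a)) hα0.le hα1
  have hb : 0 ≤ b := le_trans ha hab
  have hba : 0 ≤ b - a := sub_nonneg.2 hab
  have hsum : Real.toNNReal a + Real.toNNReal (b - a) = Real.toNNReal b := by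
    rw [← Real.toNNReal_add ha hba]; ring_nf
  rw [hsum] at h
  have h' := (NNReal.coe_le_coe.2 h)
  push_cast [NNReal.coe_rpow, Real.coe_toNNReal _ ha, Real.coe_toNNReal _ hb,
    Real.coe_toNNReal _ hba] at h'
  linarith

lemma psiR_eq (α : ℝ) (R : ℕ) (hR : 1 ≤ R) (x : ℤ) :
    psiR α R x = (R : ℝ) ^ α / (max |(x : ℝ)| (R : ℝ)) ^ α := by
  have hRpos : (0 : ℝ) < R := by exact_mod_cast hR
  unfold psiR
  split_ifs with h
  · have hx : |(x : ℝ)| < (R : ℝ) := by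
      rw [← Int.cast_abs]; exact_mod_cast h
    rw [max_eq_right hx.le, div_self (ne_of_gt (Real.rpow_pos_of_pos hRpos α))]
  · have hx : (R : ℝ) ≤ |(x : ℝ)| := by
      rw [← Int.cast_abs]; exact_mod_cast not_lt.1 h
    rw [max_eq_left hx, Real.div_rpow (le_of_lt hRpos) (abs_nonneg _)]

/-- Lemma (weight function estimate): for `α ∈ (0,1]` and `R ∈ ℕ`, for all `x, y ∈ ℤ`,
`|ψ_R(x) − ψ_R(y)| / ψ_R(x) ≤ R^{−α} |x − y|^α`. -/
theorem psiR_estimate (α : ℝ) (hα0 : 0 < α) (hα1 : α ≤ 1) (R : ℕ) (hR : 1 ≤ R) :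
    ∀ x y : ℤ, |psiR α R x - psiR α R y| / psiR α R x ≤
      (1 / (R : ℝ) ^ α) * |(x : ℝ) - (y : ℝ)| ^ α := by
  intro x y
  have hRpos : (0 : ℝ) < R := by exact_mod_cast hR
  have hr : (0 : ℝ) < (R : ℝ) ^ α := Real.rpow_pos_of_pos hRpos α
  set A : ℝ := max |(x : ℝ)| (R : ℝ) with hA
  set B : ℝ := max |(y : ℝ)| (R : ℝ) with hB
  have hRA : (R : ℝ) ≤ A := le_max_right _ _
  have hRB : (R : ℝ) ≤ B := le_max_right _ _
  have hApos : 0 < A := lt_of_lt_of_le hRpos hRA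
  have hBpos : 0 < B := lt_of_lt_of_le hRpos hRB
  have ha : (0 : ℝ) < A ^ α := Real.rpow_pos_of_pos hApos α
  have hb : (0 : ℝ) < B ^ α := Real.rpow_pos_of_pos hBpos α
  have hrb : (R : ℝ) ^ α ≤ B ^ α := Real.rpow_le_rpow hRpos.le hRB hα0.le
  rw [psiR_eq α R hR x, psiR_eq α R hR y]
  -- key: |A^α - B^α| ≤ |x - y|^α
  have hABxy : |A - B| ≤ |(x : ℝ) - (y : ℝ)| := by
    calc |A - B| ≤ abs (|(x : ℝ)| - |(y : ℝ)|) := abs_max_sub_max_le_abs _ _ _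
    _ ≤ |(x : ℝ) - (y : ℝ)| := abs_abs_sub_abs_le_abs_sub _ _
  have key : |A ^ α - B ^ α| ≤ |(x : ℝ) - (y : ℝ)| ^ α := by
    have h1 : |A ^ α - B ^ α| ≤ |A - B| ^ α := by
      rcases le_total A B with h | h
      · rw [abs_sub_comm, abs_of_nonneg (sub_nonneg.2 (Real.rpow_le_rpow hApos.le h hα0.le)),
          abs_sub_comm, abs_of_nonneg (sub_nonneg.2 h)]
        exact rpow_sub_rpow_le α A B hα0 hα1 hApos.le h
      · rw [abs_of_nonneg (sub_nonneg.2 (Real.rpow_le_rpow hBpos.le h hα0.le)),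
          abs_of_nonneg (sub_nonneg.2 h)]
        exact rpow_sub_rpow_le α B A hα0 hα1 hBpos.le h
    exact h1.trans (Real.rpow_le_rpow (abs_nonneg _) hABxy hα0.le)
  -- compute the left-hand side
  have heq : |(R : ℝ) ^ α / A ^ α - (R : ℝ) ^ α / B ^ α| / ((R : ℝ) ^ α / A ^ α)
      = |B ^ α - A ^ α| / B ^ α := by
    have h1 : (R : ℝ) ^ α / A ^ α - (R : ℝ) ^ α / B ^ α
        = (R : ℝ) ^ α * (B ^ α - A ^ α) / (A ^ α * B ^ α) := by
      field_simp
    rw [h1, abs_div, abs_mul, abs_of_pos hr, abs_of_pos (mul_pos ha hb)]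
    field_simp
  rw [heq, abs_sub_comm]
  calc |A ^ α - B ^ α| / B ^ α ≤ |(x : ℝ) - (y : ℝ)| ^ α / (R : ℝ) ^ α := by
        gcongr
    _ = (1 / (R : ℝ) ^ α) * |(x : ℝ) - (y : ℝ)| ^ α := by ring
end
end

section
/- Let k: ℤ → [0,∞) be a nontrivial kernel with k(0)=0, k(−j)=k(j) for all j ∈ ℤ and ∑_{j∈ℤ} k(j) < ∞. Let u: ℤ → ℝ be bounded with u(0) = 0 and let w(j) = (u(j) + u(−j))/2. Then Ψ_{2,Υ}(u)(0) ≥ ∑_{j∈ℤ} k(j)²·H(−w(j)). -/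
open scoped BigOperators
open Filter Set

noncomputable section

lemma exp_avg (a b : ℝ) : 2 * Real.exp ((a + b) / 2) ≤ Real.exp a + Real.exp b := by
  have h : Real.exp ((a + b) / 2) = Real.exp (a / 2) * Real.exp (b / 2) := by
    rw [← Real.exp_add]; ring_nf
  have ha : Real.exp (a / 2) * Real.exp (a / 2) = Real.exp a := by
    rw [← Real.exp_add]; ring_nf
  have hb : Real.exp (b / 2) * Real.exp (b / 2) = Real.exp b := by
    rw [← Real.exp_add]; ring_nf
  nlinarith [sq_nonneg (Real.exp (a / 2) - Real.exp (b / 2))]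

set_option maxHeartbeats 1000000 in
/-- The basic lower estimate: for bounded `u` with `u(0)=0` and symmetrization
`w(j) = (u(j)+u(−j))/2` one has `Ψ_{2,Υ}(u)(0) ≥ ∑_{j∈ℤ} k(j)² H(−w(j))`. -/
theorem basic_estimate (k : ℤ → ℝ) (hk : IsKernel k) (u : ℤ → ℝ) (hu : BddFun u)
    (h0 : u 0 = 0) :
    ∑' j : ℤ, (k j) ^ 2 * Hfun (-((u j + u (-j)) / 2)) ≤ Psi2 k u 0 := by
  obtain ⟨M, hM⟩ := hu
  have hM0 : 0 ≤ M := le_trans (abs_nonneg _) (hM 0)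
  set f : ℤ × ℤ → ℝ := fun p => k p.1 * k p.2 * Real.exp (u (0 + p.2) - u 0) *
    Ups (u (0 + p.1 + p.2) - u (0 + p.1) - u (0 + p.2) + u 0) with hf
  have hfnn : ∀ p, 0 ≤ f p := fun p =>
    mul_nonneg (mul_nonneg (mul_nonneg (hk.nonneg _) (hk.nonneg _)) (Real.exp_pos _).le)
      (Ups_nonneg _)
  set C : ℝ := Real.exp (2 * M) * (Real.exp (4 * M) + 4 * M) with hC
  have hfle : ∀ p, f p ≤ k p.1 * k p.2 * C := by
    intro p
    have b1 := abs_le.1 (hM (0 + p.2))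
    have b2 := abs_le.1 (hM 0)
    have b3 := abs_le.1 (hM (0 + p.1 + p.2))
    have b4 := abs_le.1 (hM (0 + p.1))
    have h1 : Real.exp (u (0 + p.2) - u 0) ≤ Real.exp (2 * M) :=
      Real.exp_le_exp.2 (by linarith [b1.2, b2.1])
    set r := u (0 + p.1 + p.2) - u (0 + p.1) - u (0 + p.2) + u 0 with hr
    have h2 : Ups r ≤ Real.exp (4 * M) + 4 * M := by
      have hrle : r ≤ 4 * M := by simp only [hr]; linarith [b3.2, b4.1, b1.1, b2.2]
      have hrge : -(4 * M) ≤ r := by simp only [hr]; linarith [b3.1, b4.2, b1.2, b2.1]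
      have := Real.exp_le_exp.2 hrle
      simp only [Ups]; linarith
    have hkk : 0 ≤ k p.1 * k p.2 := mul_nonneg (hk.nonneg _) (hk.nonneg _)
    calc f p ≤ k p.1 * k p.2 * Real.exp (2 * M) * Ups r := by
            apply mul_le_mul_of_nonneg_right _ (Ups_nonneg _)
            exact mul_le_mul_of_nonneg_left h1 hkk
      _ ≤ k p.1 * k p.2 * Real.exp (2 * M) * (Real.exp (4 * M) + 4 * M) := by
            apply mul_le_mul_of_nonneg_left h2
            exact mul_nonneg hkk (Real.exp_pos _).le
      _ = k p.1 * k p.2 * C := by rw [hC]; ring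
  have hfsum : Summable f := by
    apply Summable.of_nonneg_of_le hfnn hfle
    exact (hk.summable.mul_of_nonneg hk.summable hk.nonneg hk.nonneg).mul_right C
  -- the anti-diagonal
  set g : ℤ → ℝ := fun j => f (j, -j) with hg
  have hinj : Function.Injective (fun j : ℤ => (j, -j)) := by
    intro a b h; exact (Prod.ext_iff.1 h).1
  have hgsum : Summable g := hfsum.comp_injective hinj
  have hgnn : ∀ j, 0 ≤ g j := fun j => hfnn _
  have hkey : ∑' j, g j ≤ ∑' p, f p :=
    Summable.tsum_le_tsum_of_inj _ hinj (fun c _ => hfnn c) (fun j => le_refl _) hgsum hfsum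
  -- explicit formula for g
  have hgval : ∀ j, g j = k j ^ 2 * Real.exp (u (-j)) * Ups (-(u j) - u (-j)) := by
    intro j
    simp only [hg, hf, zero_add, add_neg_cancel, h0]
    rw [show k j * k (-j) = k j ^ 2 by rw [hk.symm]; ring]
    ring_nf
  -- the negated version
  have hgneg : Summable (fun j => g (-j)) := (Equiv.neg ℤ).summable_iff.2 hgsum
  have hgnegsum : ∑' j, g (-j) = ∑' j, g j := (Equiv.neg ℤ).tsum_eq g
  -- pointwise inequality
  have hpt : ∀ j : ℤ, k j ^ 2 * Hfun (-((u j + u (-j)) / 2)) ≤ (1 / 4) * (g j + g (-j)) := by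
    intro j
    rw [hgval j, hgval (-j)]
    simp only [neg_neg]
    set a := u j; set b := u (-j)
    have hU : Ups (2 * -((a + b) / 2)) = Ups (-a - b) := by ring_nf
    have hexp : 2 * Real.exp ((a + b) / 2) ≤ Real.exp a + Real.exp b := exp_avg a b
    have hUnn : 0 ≤ Ups (-a - b) := Ups_nonneg _
    have hk2 : (0:ℝ) ≤ k j ^ 2 := sq_nonneg _
    have hkj : k (-j) ^ 2 = k j ^ 2 := by rw [hk.symm]
    rw [hkj]
    simp only [Hfun, neg_neg, hU]
    have hUb : Ups (-b - a) = Ups (-a - b) := by ring_nf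
    rw [hUb]
    have : k j ^ 2 * ((1:ℝ) / 2 * Real.exp ((a + b) / 2) * Ups (-a - b)) ≤
        k j ^ 2 * ((1 / 4) * ((Real.exp b + Real.exp a) * Ups (-a - b))) := by
      apply mul_le_mul_of_nonneg_left _ hk2
      nlinarith [mul_le_mul_of_nonneg_right hexp hUnn]
    calc k j ^ 2 * (1 / 2 * Real.exp ((a + b) / 2) * Ups (-a - b))
        ≤ k j ^ 2 * ((1 / 4) * ((Real.exp b + Real.exp a) * Ups (-a - b))) := this
      _ = 1 / 4 * (k j ^ 2 * Real.exp b * Ups (-a - b) + k j ^ 2 * Real.exp a * Ups (-a - b)) := by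
          ring
  have hrhs_sum : Summable (fun j => (1 / 4 : ℝ) * (g j + g (-j))) :=
    ((hgsum.add hgneg).mul_left _)
  have hTnn : ∀ j : ℤ, 0 ≤ k j ^ 2 * Hfun (-((u j + u (-j)) / 2)) := by
    intro j
    apply mul_nonneg (sq_nonneg _)
    exact mul_nonneg (mul_nonneg (by norm_num) (Real.exp_pos _).le) (Ups_nonneg _)
  have hTsum : Summable (fun j : ℤ => k j ^ 2 * Hfun (-((u j + u (-j)) / 2))) :=
    Summable.of_nonneg_of_le hTnn hpt hrhs_sum
  calc ∑' j : ℤ, k j ^ 2 * Hfun (-((u j + u (-j)) / 2))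
      ≤ ∑' j : ℤ, (1 / 4 : ℝ) * (g j + g (-j)) := Summable.tsum_le_tsum hpt hTsum hrhs_sum
    _ = (1 / 4) * (∑' j, g j + ∑' j, g (-j)) := by
        rw [tsum_mul_left, Summable.tsum_add hgsum hgneg]
    _ = (1 / 2) * ∑' j, g j := by rw [hgnegsum]; ring
    _ ≤ (1 / 2) * ∑' p, f p := by linarith [hkey]
    _ = Psi2 k u 0 := rfl
end
end
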